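/- arXiv:1608.03266 — 5 statements merged into one kernel-verified Lean document; each statement's English description precedes it below -/
import Mathlib

section
/- Let a ∈ L^{N/p}(ℝ^N) with ‖a^+‖_{L^{N/p}} < S, where a^+(x) = max{a(x),0}. Then every nonzero u ∈ C_c^∞(ℝ^N;ℝ) satisfying the Nehari identity ∫_{ℝ^N}(|∇u|^p − a(x)|u|^p) dx = ∫_{ℝ^N}|u|^{p*} dx satisfies ∫_{ℝ^N}|u|^{p*} dx ≥ (S − ‖a^+‖_{L^{N/p}})^{N/p}, and consequently Φ(u) = (1/N)∫_{ℝ^N}|u|^{p*} dx ≥ (1/N)(S − ‖a^+‖_{L^{N/p}})^{N/p}, where Φ(u) = ∫_{ℝ^N}[(1/p)(|∇u|^p − a(x)|u|^p) − (1/p*)|u|^{p*}] dx. -/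
open MeasureTheory

/-- The best Sobolev constant
`S = inf { ∫|∇u|^p / (∫|u|^{p*})^{p/p*} : u ∈ C_c^∞(ℝ^N;ℝ), u ≠ 0 }`, `p* = Np/(N−p)`. -/
noncomputable def sobolevS (N : ℕ) (p : ℝ) : ℝ :=
  sInf { r : ℝ | ∃ u : EuclideanSpace ℝ (Fin N) → ℝ, ContDiff ℝ (⊤ : ℕ∞) u ∧ HasCompactSupport u ∧
    u ≠ 0 ∧ r = (∫ x, ‖fderiv ℝ u x‖ ^ p) /
      (∫ x, |u x| ^ ((N : ℝ) * p / ((N : ℝ) - p))) ^ (p / ((N : ℝ) * p / ((N : ℝ) - p))) }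

/-- If `a ∈ L^{N/p}(ℝ^N)` with `‖a⁺‖_{N/p} < S`, then every nonzero
`u ∈ C_c^∞` satisfying the Nehari identity satisfies
`∫|u|^{p*} ≥ (S − ‖a⁺‖_{N/p})^{N/p}`, and consequently
`Φ(u) = (1/N)∫|u|^{p*} ≥ (1/N)(S − ‖a⁺‖_{N/p})^{N/p}`. -/
theorem stmt_2 (N : ℕ) (hN : 2 ≤ N) (p : ℝ) (hp1 : 1 < p) (hpN : p < (N : ℝ))
    (a : EuclideanSpace ℝ (Fin N) → ℝ)
    (ha : MemLp a (ENNReal.ofReal ((N : ℝ) / p)) volume)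
    (t : ℝ)
    (ht : t = (eLpNorm (fun x => max (a x) 0) (ENNReal.ofReal ((N : ℝ) / p)) volume).toReal)
    (htS : t < sobolevS N p)
    (u : EuclideanSpace ℝ (Fin N) → ℝ) (hu : ContDiff ℝ (⊤ : ℕ∞) u) (hsupp : HasCompactSupport u)
    (hu0 : u ≠ 0)
    (hNehari : (∫ x, (‖fderiv ℝ u x‖ ^ p - a x * |u x| ^ p)) =
      ∫ x, |u x| ^ ((N : ℝ) * p / ((N : ℝ) - p))) :
    (∫ x, |u x| ^ ((N : ℝ) * p / ((N : ℝ) - p))) ≥ (sobolevS N p - t) ^ ((N : ℝ) / p) ∧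
    (∫ x, ((1 / p) * (‖fderiv ℝ u x‖ ^ p - a x * |u x| ^ p)
        - (1 / ((N : ℝ) * p / ((N : ℝ) - p))) * |u x| ^ ((N : ℝ) * p / ((N : ℝ) - p))))
      = (1 / (N : ℝ)) * ∫ x, |u x| ^ ((N : ℝ) * p / ((N : ℝ) - p)) ∧
    (∫ x, ((1 / p) * (‖fderiv ℝ u x‖ ^ p - a x * |u x| ^ p)
        - (1 / ((N : ℝ) * p / ((N : ℝ) - p))) * |u x| ^ ((N : ℝ) * p / ((N : ℝ) - p))))
      ≥ (1 / (N : ℝ)) * (sobolevS N p - t) ^ ((N : ℝ) / p) := by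
  have hp0 : (0:ℝ) < p := lt_trans one_pos hp1
  have hN0 : (0:ℝ) < (N:ℝ) := lt_trans hp0 hpN
  have hNp : (0:ℝ) < (N:ℝ) - p := by linarith
  have hN' : (N:ℝ) ≠ 0 := hN0.ne'
  have hp' : p ≠ 0 := hp0.ne'
  have hNp' : (N:ℝ) - p ≠ 0 := hNp.ne'
  set q : ℝ := (N : ℝ) * p / ((N : ℝ) - p) with hqdef
  have hq0 : 0 < q := div_pos (mul_pos hN0 hp0) hNp
  set P : ℝ := (N:ℝ) / p with hPdef
  set Q : ℝ := (N:ℝ) / ((N:ℝ) - p) with hQdef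
  have hP1 : 1 < P := (one_lt_div hp0).2 hpN
  have hP0 : 0 < P := lt_trans one_pos hP1
  have hQ0 : 0 < Q := div_pos hN0 hNp
  have hPQ : P.HolderConjugate Q := Real.holderConjugate_iff.2 ⟨hP1, by
    rw [hPdef, hQdef]; field_simp; ring⟩
  -- continuity and compact support facts
  have hcu : Continuous u := hu.continuous
  have hcq : Continuous fun x => |u x| ^ q :=
    hcu.abs.rpow_const fun x => Or.inr hq0.le
  have hsq : HasCompactSupport fun x => |u x| ^ q := by
    have : HasCompactSupport ((fun y : ℝ => |y| ^ q) ∘ u) :=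
      hsupp.comp_left (by simp [Real.zero_rpow hq0.ne'])
    exact this
  have Iq : Integrable (fun x => |u x| ^ q) volume :=
    hcq.integrable_of_hasCompactSupport hsq
  have hfc : Continuous (fderiv ℝ u) := hu.continuous_fderiv (by simp)
  have hfs : HasCompactSupport (fderiv ℝ u) := HasCompactSupport.fderiv (𝕜 := ℝ) hsupp
  have Ig : Integrable (fun x => ‖fderiv ℝ u x‖ ^ p) volume := by
    refine (hfc.norm.rpow_const fun x => Or.inr hp0.le).integrable_of_hasCompactSupport ?_
    have : HasCompactSupport ((fun y : EuclideanSpace ℝ (Fin N) →L[ℝ] ℝ => ‖y‖ ^ p) ∘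
        fderiv ℝ u) := hfs.comp_left (by simp [Real.zero_rpow hp0.ne'])
    exact this
  have hup : MemLp (fun x => |u x| ^ p) (ENNReal.ofReal Q) volume := by
    refine Continuous.memLp_of_hasCompactSupport
      (hcu.abs.rpow_const fun x => Or.inr hp0.le) ?_
    have : HasCompactSupport ((fun y : ℝ => |y| ^ p) ∘ u) :=
      hsupp.comp_left (by simp [Real.zero_rpow hp0.ne'])
    exact this
  have haplus : MemLp (fun x => max (a x) 0) (ENNReal.ofReal P) volume := ha.pos_part
  -- integrability of a * |u|^p and a⁺ * |u|^p via Hölder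
  have hsum : (1:ENNReal) / 1 = 1 / ENNReal.ofReal P + 1 / ENNReal.ofReal Q := by
    rw [one_div, one_div, one_div, ← ENNReal.ofReal_inv_of_pos hP0,
      ← ENNReal.ofReal_inv_of_pos hQ0,
      ← ENNReal.ofReal_add (by positivity) (by positivity), hPQ.inv_add_inv_eq_one]
    simp
  have Imul : ∀ b : EuclideanSpace ℝ (Fin N) → ℝ, MemLp b (ENNReal.ofReal P) volume →
      Integrable (fun x => b x * |u x| ^ p) volume := by
    intro b hb
    have := (MemLp.smul (𝕜 := ℝ) hup hb (hpqr := ⟨by simpa only [one_div] using hsum.symm⟩) : MemLp (b • fun x => |u x| ^ p) 1 volume)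
    rw [memLp_one_iff_integrable] at this
    exact this
  have Ia : Integrable (fun x => a x * |u x| ^ p) volume := Imul a ha
  have Iap : Integrable (fun x => max (a x) 0 * |u x| ^ p) volume := Imul _ haplus
  set T : ℝ := ∫ x, |u x| ^ q with hTdef
  set G : ℝ := ∫ x, ‖fderiv ℝ u x‖ ^ p with hGdef
  -- T > 0
  have hT0 : 0 < T := by
    rw [hTdef, integral_pos_iff_support_of_nonneg (fun x => by positivity) Iq]
    have hss : Function.support (fun x => |u x| ^ q) = Function.support u := by
      ext x
      simp [Function.mem_support, Real.rpow_eq_zero_iff_of_nonneg (abs_nonneg _),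
        abs_eq_zero, hq0.ne']
    rw [hss]
    have hop : IsOpen (Function.support u) := by
      rw [Function.support_eq_preimage]
      exact isOpen_compl_singleton.preimage hcu
    exact hop.measure_pos volume (Function.support_nonempty_iff.2 hu0)
  have hTq0 : 0 < T ^ (p / q) := Real.rpow_pos_of_pos hT0 _
  -- Sobolev bound : S * T^(p/q) ≤ G
  have hbdd : BddBelow { r : ℝ | ∃ v : EuclideanSpace ℝ (Fin N) → ℝ, ContDiff ℝ (⊤ : ℕ∞) v ∧
      HasCompactSupport v ∧ v ≠ 0 ∧ r = (∫ x, ‖fderiv ℝ v x‖ ^ p) /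
        (∫ x, |v x| ^ ((N : ℝ) * p / ((N : ℝ) - p))) ^ (p / ((N : ℝ) * p / ((N : ℝ) - p))) } := by
    refine ⟨0, fun r hr => ?_⟩
    obtain ⟨v, -, -, -, rfl⟩ := hr
    have h1 : 0 ≤ ∫ x, ‖fderiv ℝ v x‖ ^ p := integral_nonneg fun x => by positivity
    have h2 : 0 ≤ (∫ x, |v x| ^ ((N : ℝ) * p / ((N : ℝ) - p))) ^
        (p / ((N : ℝ) * p / ((N : ℝ) - p))) :=
      Real.rpow_nonneg (integral_nonneg fun x => by positivity) _
    exact div_nonneg h1 h2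
  have hS : sobolevS N p ≤ G / T ^ (p / q) :=
    csInf_le hbdd ⟨u, hu, hsupp, hu0, rfl⟩
  have hSG : sobolevS N p * T ^ (p / q) ≤ G := (le_div_iff₀ hTq0).mp hS
  -- Hölder bound : ∫ a |u|^p ≤ t * T^(p/q)
  have hpqQ : ∀ x : EuclideanSpace ℝ (Fin N), (|u x| ^ p) ^ Q = |u x| ^ q := by
    intro x
    rw [← Real.rpow_mul (abs_nonneg _)]
    congr 1
    rw [hQdef, hqdef]
    field_simp
  have holder : (∫ x, max (a x) 0 * |u x| ^ p) ≤
      (∫ x, (max (a x) 0) ^ P) ^ (1 / P) * (∫ x, (|u x| ^ p) ^ Q) ^ (1 / Q) :=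
    integral_mul_le_Lp_mul_Lq_of_nonneg hPQ
      (Filter.Eventually.of_forall fun x => le_max_right _ _)
      (Filter.Eventually.of_forall fun x => by positivity) haplus hup
  have ht' : t = (∫ x, (max (a x) 0) ^ P) ^ (1 / P) := by
    rw [ht, MemLp.eLpNorm_eq_integral_rpow_norm (by simp [hP0]) ENNReal.ofReal_ne_top haplus]
    rw [ENNReal.toReal_ofReal (Real.rpow_nonneg
      (integral_nonneg fun x => by positivity) _)]
    rw [ENNReal.toReal_ofReal hP0.le]
    rw [one_div]
    congr 1
    refine integral_congr_ae (Filter.Eventually.of_forall fun x => ?_)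
    simp only [Real.norm_of_nonneg (le_max_right (a x) 0)]
  have hQT : (∫ x, (|u x| ^ p) ^ Q) ^ (1 / Q) = T ^ (p / q) := by
    have : (∫ x, (|u x| ^ p) ^ Q) = T := by
      rw [hTdef]
      exact integral_congr_ae (Filter.Eventually.of_forall fun x => hpqQ x)
    rw [this]
    congr 1
    rw [hQdef, hqdef]
    field_simp
  have hA : (∫ x, a x * |u x| ^ p) ≤ t * T ^ (p / q) := by
    have h1 : (∫ x, a x * |u x| ^ p) ≤ ∫ x, max (a x) 0 * |u x| ^ p :=
      integral_mono Ia Iap fun x =>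
        mul_le_mul_of_nonneg_right (le_max_left _ _) (by positivity)
    calc (∫ x, a x * |u x| ^ p) ≤ ∫ x, max (a x) 0 * |u x| ^ p := h1
      _ ≤ (∫ x, (max (a x) 0) ^ P) ^ (1 / P) * (∫ x, (|u x| ^ p) ^ Q) ^ (1 / Q) := holder
      _ = t * T ^ (p / q) := by rw [← ht', hQT]
  -- Nehari identity split
  have hsplit : G - (∫ x, a x * |u x| ^ p) = T := by
    rw [hGdef, ← integral_sub Ig Ia]
    exact hNehari
  -- key inequality
  have hkey : (sobolevS N p - t) * T ^ (p / q) ≤ T := by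
    calc (sobolevS N p - t) * T ^ (p / q)
        = sobolevS N p * T ^ (p / q) - t * T ^ (p / q) := by ring
      _ ≤ G - (∫ x, a x * |u x| ^ p) := sub_le_sub hSG hA
      _ = T := hsplit
  have hSt0 : 0 < sobolevS N p - t := by linarith
  have key1 : (sobolevS N p - t) ^ ((N:ℝ) / p) ≤ T := by
    have h1 : sobolevS N p - t ≤ T ^ (1 - p / q) := by
      rw [Real.rpow_sub hT0, Real.rpow_one]
      exact (le_div_iff₀ hTq0).mpr hkey
    have h2 : ((sobolevS N p - t)) ^ ((N:ℝ)/p) ≤ (T ^ (1 - p / q)) ^ ((N:ℝ)/p) :=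
      Real.rpow_le_rpow hSt0.le h1 (by positivity)
    have h3 : (T ^ (1 - p / q)) ^ ((N:ℝ)/p) = T := by
      rw [← Real.rpow_mul hT0.le]
      have he : (1 - p / q) * ((N:ℝ)/p) = 1 := by
        rw [hqdef]
        field_simp
        ring
      rw [he, Real.rpow_one]
    rwa [h3] at h2
  -- second conjunct
  have key2 : (∫ x, ((1 / p) * (‖fderiv ℝ u x‖ ^ p - a x * |u x| ^ p)
      - (1 / q) * |u x| ^ q)) = (1 / (N:ℝ)) * T := by
    have Ifg : Integrable (fun x => ‖fderiv ℝ u x‖ ^ p - a x * |u x| ^ p) volume :=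
      Ig.sub Ia
    rw [integral_sub (Ifg.const_mul (1/p)) (Iq.const_mul (1/q)),
      integral_const_mul, integral_const_mul, hNehari]
    have : (1:ℝ) / p - 1 / q = 1 / (N:ℝ) := by
      rw [hqdef]
      field_simp
      ring
    calc 1 / p * T - 1 / q * T = (1 / p - 1 / q) * T := by ring
      _ = 1 / (N:ℝ) * T := by rw [this]
  refine ⟨key1, key2, ?_⟩
  rw [key2]
  exact mul_le_mul_of_nonneg_left key1 (by positivity)
end

section
/- Let U(x) = [1 + |x|^{p/(p−1)}]^{−(N−p)/p} for x ∈ ℝ^N. Then 0 < ∫_{ℝ^N} U^{p*} dx < ∞ and 0 < ∫_{ℝ^N} |∇U|^p dx < ∞, and there exists a constant C_{N,p} > 0 such that the function u = C_{N,p} U satisfies ∫_{ℝ^N} |∇u|^p dx = ∫_{ℝ^N} u^{p*} dx. -/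
open MeasureTheory Real

lemma aux_pow_bound {q t : ℝ} (hq : 1 ≤ q) (ht : 0 ≤ t) :
    (1 + t) ^ q ≤ 2 ^ q * (1 + t ^ q) := by
  have hq0 : 0 ≤ q := by linarith
  rcases le_total t 1 with h | h
  · have h1 : (1 + t) ^ q ≤ 2 ^ q :=
      Real.rpow_le_rpow (by linarith) (by linarith) hq0
    have h2 : (1:ℝ) ≤ 1 + t ^ q := le_add_of_nonneg_right (Real.rpow_nonneg ht q)
    nlinarith [Real.rpow_nonneg (show (0:ℝ) ≤ 2 by norm_num) q]
  · have h1 : (1 + t) ^ q ≤ (2 * t) ^ q :=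
      Real.rpow_le_rpow (by linarith) (by linarith) hq0
    have h2 : (2 * t) ^ q = 2 ^ q * t ^ q :=
      Real.mul_rpow (by norm_num) ht
    have h3 : t ^ q ≤ 1 + t ^ q := by linarith
    have h4 : (0:ℝ) ≤ 2 ^ q := Real.rpow_nonneg (by norm_num) q
    nlinarith

lemma aux_integrable {N : ℕ} {q r : ℝ} (hq : 1 ≤ q) (hr : (N : ℝ) < q * r) :
    Integrable (fun x : EuclideanSpace ℝ (Fin N) => (1 + ‖x‖ ^ q) ^ (-r)) := by
  have hq0 : 0 < q := by linarith
  have hr0 : 0 < r := by nlinarith [show (0:ℝ) ≤ (N:ℝ) from Nat.cast_nonneg N]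
  have key : Integrable (fun x : EuclideanSpace ℝ (Fin N) => (1 + ‖x‖) ^ (-(q * r))) :=
    integrable_one_add_norm (by rw [finrank_euclideanSpace_fin]; exact hr)
  refine (key.const_mul ((2:ℝ) ^ (q * r))).mono' ?_ (ae_of_all _ ?_)
  · refine Continuous.aestronglyMeasurable ?_
    refine (continuous_const.add (continuous_norm.rpow_const fun x => Or.inr hq0.le)).rpow_const
      fun x => Or.inl (show (1:ℝ) + ‖x‖ ^ q ≠ 0 by positivity)
  · intro x
    have hb : (0:ℝ) < 1 + ‖x‖ ^ q := by positivity
    rw [Real.norm_eq_abs, abs_of_nonneg (Real.rpow_nonneg hb.le _)]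
    have h1 : (2:ℝ) ^ (-q) * (1 + ‖x‖) ^ q ≤ 1 + ‖x‖ ^ q := by
      have := aux_pow_bound hq (norm_nonneg x)
      have h2 : (0:ℝ) < 2 ^ (-q) := Real.rpow_pos_of_pos (by norm_num) _
      have h3 : (2:ℝ) ^ (-q) * (2 ^ q * (1 + ‖x‖ ^ q)) = 1 + ‖x‖ ^ q := by
        rw [← mul_assoc, ← Real.rpow_add (by norm_num), neg_add_cancel, Real.rpow_zero, one_mul]
      nlinarith
    have h4 : (0:ℝ) < 2 ^ (-q) * (1 + ‖x‖) ^ q := by positivity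
    calc (1 + ‖x‖ ^ q) ^ (-r) ≤ ((2:ℝ) ^ (-q) * (1 + ‖x‖) ^ q) ^ (-r) :=
          Real.rpow_le_rpow_of_nonpos h4 h1 (by linarith)
      _ = 2 ^ (q * r) * (1 + ‖x‖) ^ (-(q * r)) := by
          rw [Real.mul_rpow (by positivity) (by positivity),
            ← Real.rpow_mul (by norm_num : (0:ℝ) ≤ 2), ← Real.rpow_mul (by positivity)]
          ring_nf

/-- Let `U(x) = (1 + |x|^{p/(p−1)})^{−(N−p)/p}`. Then
`0 < ∫ U^{p*} < ∞`, `0 < ∫ |∇U|^p < ∞`, and there is `C_{N,p} > 0` such that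
`u = C_{N,p} U` satisfies `∫ |∇u|^p = ∫ u^{p*}`. -/
theorem stmt_4 (N : ℕ) (hN : 2 ≤ N) (p : ℝ) (hp1 : 1 < p) (hpN : p < (N : ℝ))
    (U : EuclideanSpace ℝ (Fin N) → ℝ)
    (hU : ∀ x, U x = (1 + ‖x‖ ^ (p / (p - 1))) ^ (-((N : ℝ) - p) / p)) :
    (0 < ∫ x, U x ^ ((N : ℝ) * p / ((N : ℝ) - p))) ∧
    Integrable (fun x => U x ^ ((N : ℝ) * p / ((N : ℝ) - p))) ∧
    (0 < ∫ x, ‖fderiv ℝ U x‖ ^ p) ∧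
    Integrable (fun x => ‖fderiv ℝ U x‖ ^ p) ∧
    ∃ C : ℝ, 0 < C ∧
      (∫ x, ‖fderiv ℝ (fun y => C * U y) x‖ ^ p) =
        ∫ x, (C * U x) ^ ((N : ℝ) * p / ((N : ℝ) - p)) := by
  set q : ℝ := p / (p - 1) with hqdef
  set s : ℝ := -((N : ℝ) - p) / p with hsdef
  have hp0 : 0 < p := by linarith
  have hp1' : 0 < p - 1 := by linarith
  have hNp : 0 < (N : ℝ) - p := by linarith
  have hN0 : (0:ℝ) < N := by linarith
  have hq1 : 1 < q := (one_lt_div hp1').mpr (by linarith)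
  have hs_neg : s < 0 := div_neg_of_neg_of_pos (by linarith) hp0
  -- derivative of U
  have hderiv : ∀ x : EuclideanSpace ℝ (Fin N), HasFDerivAt U
      ((s * (1 + ‖x‖ ^ q) ^ (s - 1) * (q * ‖x‖ ^ (q - 2))) • innerSL ℝ x) x := by
    intro x
    have hb : (0:ℝ) < 1 + ‖x‖ ^ q := by positivity
    have h1 : HasFDerivAt (fun y : EuclideanSpace ℝ (Fin N) => 1 + ‖y‖ ^ q)
        ((q * ‖x‖ ^ (q - 2)) • innerSL ℝ x) x := (hasFDerivAt_norm_rpow x hq1).const_add 1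
    have h2 : HasDerivAt (fun t : ℝ => t ^ s) (s * (1 + ‖x‖ ^ q) ^ (s - 1)) (1 + ‖x‖ ^ q) :=
      Real.hasDerivAt_rpow_const (Or.inl hb.ne')
    have h3 := h2.comp_hasFDerivAt x h1
    have hfun : U = fun y : EuclideanSpace ℝ (Fin N) => (1 + ‖y‖ ^ q) ^ s := funext hU
    rw [hfun]
    rw [smul_smul] at h3
    exact h3
  -- norm of the derivative
  have hnorm : ∀ x : EuclideanSpace ℝ (Fin N), ‖fderiv ℝ U x‖ =
      (((N:ℝ) - p) / (p - 1)) * ((1 + ‖x‖ ^ q) ^ (s - 1) * ‖x‖ ^ (q - 1)) := by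
    intro x
    have hb : (0:ℝ) < 1 + ‖x‖ ^ q := by positivity
    have hA : (0:ℝ) < (1 + ‖x‖ ^ q) ^ (s - 1) := Real.rpow_pos_of_pos hb _
    have hw : (0:ℝ) ≤ ‖x‖ ^ (q - 2) := Real.rpow_nonneg (norm_nonneg x) _
    rw [(hderiv x).fderiv, norm_smul, Real.norm_eq_abs, innerSL_apply_norm]
    have hle : s * (1 + ‖x‖ ^ q) ^ (s - 1) * (q * ‖x‖ ^ (q - 2)) ≤ 0 := by
      rw [mul_assoc]
      exact mul_nonpos_iff.mpr (Or.inr ⟨hs_neg.le, by positivity⟩)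
    have habs : |s * (1 + ‖x‖ ^ q) ^ (s - 1) * (q * ‖x‖ ^ (q - 2))| =
        (-s) * (1 + ‖x‖ ^ q) ^ (s - 1) * (q * ‖x‖ ^ (q - 2)) := by
      rw [abs_of_nonpos hle]; ring
    rw [habs]
    have hxq : ‖x‖ ^ (q - 2) * ‖x‖ = ‖x‖ ^ (q - 1) := by
      rcases eq_or_ne x 0 with h | h
      · simp [h, Real.zero_rpow (show q - 1 ≠ 0 by linarith)]
      · rw [show q - 1 = q - 2 + 1 by ring]
        exact (Real.rpow_add_one (norm_ne_zero_iff.mpr h) (q - 2)).symm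
    have hsq : (-s) * q = ((N:ℝ) - p) / (p - 1) := by
      rw [hsdef, hqdef]; field_simp; try ring
    rw [← hxq, ← hsq]; ring
  -- pointwise formula for |∇U|^p
  have hc0 : (0:ℝ) ≤ ((N:ℝ) - p) / (p - 1) := le_of_lt (div_pos hNp hp1')
  have hF : ∀ x : EuclideanSpace ℝ (Fin N), ‖fderiv ℝ U x‖ ^ p =
      ((((N:ℝ) - p) / (p - 1)) ^ p) * (‖x‖ ^ q * (1 + ‖x‖ ^ q) ^ (-(N:ℝ))) := by
    intro x
    have hb : (0:ℝ) < 1 + ‖x‖ ^ q := by positivity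
    have hA : (0:ℝ) < (1 + ‖x‖ ^ q) ^ (s - 1) := Real.rpow_pos_of_pos hb _
    rw [hnorm x, Real.mul_rpow hc0 (by positivity),
      Real.mul_rpow hA.le (Real.rpow_nonneg (norm_nonneg x) _),
      ← Real.rpow_mul hb.le, ← Real.rpow_mul (norm_nonneg x)]
    have e1 : (s - 1) * p = -(N:ℝ) := by rw [hsdef]; field_simp; try ring
    have e2 : (q - 1) * p = q := by rw [hqdef]; field_simp; try ring
    rw [e1, e2]; ring
  -- pointwise formula for U^{p*}
  have hG : ∀ x : EuclideanSpace ℝ (Fin N),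
      U x ^ ((N:ℝ) * p / ((N:ℝ) - p)) = (1 + ‖x‖ ^ q) ^ (-(N:ℝ)) := by
    intro x
    have hb : (0:ℝ) < 1 + ‖x‖ ^ q := by positivity
    rw [hU x, ← Real.rpow_mul hb.le]
    congr 1
    rw [hsdef]; field_simp; try ring
  -- integrability facts
  have hqN : (N:ℝ) < q * (N:ℝ) := by nlinarith
  have hInt1 : Integrable (fun x : EuclideanSpace ℝ (Fin N) => (1 + ‖x‖ ^ q) ^ (-(N:ℝ))) :=
    aux_integrable hq1.le hqN
  have hqN1 : (N:ℝ) < q * ((N:ℝ) - 1) := by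
    rw [hqdef, div_mul_eq_mul_div, lt_div_iff₀ hp1']; nlinarith
  have hIntN1 : Integrable (fun x : EuclideanSpace ℝ (Fin N) => (1 + ‖x‖ ^ q) ^ (-((N:ℝ) - 1))) :=
    aux_integrable hq1.le hqN1
  have hInt2 : Integrable (fun x : EuclideanSpace ℝ (Fin N) =>
      ‖x‖ ^ q * (1 + ‖x‖ ^ q) ^ (-(N:ℝ))) := by
    refine hIntN1.mono' ?_ (ae_of_all _ ?_)
    · refine Continuous.aestronglyMeasurable ?_
      exact (continuous_norm.rpow_const fun x => Or.inr (by linarith)).mul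
        ((continuous_const.add (continuous_norm.rpow_const fun x => Or.inr (by linarith))).rpow_const
          fun x => Or.inl (show (1:ℝ) + ‖x‖ ^ q ≠ 0 by positivity))
    · intro x
      have hb : (0:ℝ) < 1 + ‖x‖ ^ q := by positivity
      have h1 : (0:ℝ) ≤ ‖x‖ ^ q := Real.rpow_nonneg (norm_nonneg x) _
      have h2 : (0:ℝ) < (1 + ‖x‖ ^ q) ^ (-(N:ℝ)) := Real.rpow_pos_of_pos hb _
      rw [Real.norm_eq_abs, abs_of_nonneg (by positivity)]
      calc ‖x‖ ^ q * (1 + ‖x‖ ^ q) ^ (-(N:ℝ)) ≤ (1 + ‖x‖ ^ q) * (1 + ‖x‖ ^ q) ^ (-(N:ℝ)) := by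
            nlinarith
        _ = (1 + ‖x‖ ^ q) ^ (-((N:ℝ) - 1)) := by
            nth_rewrite 1 [← Real.rpow_one (1 + ‖x‖ ^ q)]
            rw [← Real.rpow_add hb]; ring_nf
  -- nonempty / nontrivial facts
  obtain ⟨i⟩ : Nonempty (Fin N) := ⟨⟨0, by omega⟩⟩
  set x₀ : EuclideanSpace ℝ (Fin N) := EuclideanSpace.single i (1:ℝ) with hx₀def
  have hx₀ : x₀ ≠ 0 := by
    intro h
    have := EuclideanSpace.norm_single (𝕜 := ℝ) i 1
    rw [← hx₀def, h] at this; simp at this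
  -- goal 2
  have goal2 : Integrable (fun x : EuclideanSpace ℝ (Fin N) =>
      U x ^ ((N : ℝ) * p / ((N : ℝ) - p))) := by
    simpa only [hG] using hInt1
  -- goal 1
  have goal1 : 0 < ∫ x, U x ^ ((N : ℝ) * p / ((N : ℝ) - p)) := by
    simp only [hG]
    refine (integral_pos_iff_support_of_nonneg ?_ ?_).mpr ?_
    · intro x; positivity
    · simpa only [hG] using goal2
    · have : Function.support (fun x : EuclideanSpace ℝ (Fin N) =>
          (1 + ‖x‖ ^ q) ^ (-(N:ℝ))) = Set.univ := by
        refine Set.eq_univ_of_forall fun x => ?_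
        have : (0:ℝ) < 1 + ‖x‖ ^ q := by positivity
        exact ne_of_gt (Real.rpow_pos_of_pos this _)
      rw [this]
      exact isOpen_univ.measure_pos volume ⟨0, trivial⟩
  -- goal 4
  have goal4 : Integrable (fun x : EuclideanSpace ℝ (Fin N) => ‖fderiv ℝ U x‖ ^ p) := by
    simpa only [hF] using hInt2.const_mul _
  -- goal 3
  have goal3 : 0 < ∫ x, ‖fderiv ℝ U x‖ ^ p := by
    simp only [hF]
    refine (integral_pos_iff_support_of_nonneg ?_ ?_).mpr ?_
    · intro x; positivity
    · simpa only [hF] using goal4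
    · refine lt_of_lt_of_le (isOpen_compl_singleton.measure_pos volume ⟨x₀, hx₀⟩)
        (measure_mono ?_)
      intro x hx
      have hxn : (0:ℝ) < ‖x‖ := norm_pos_iff.mpr hx
      have hb : (0:ℝ) < 1 + ‖x‖ ^ q := by positivity
      have : (0:ℝ) < ((((N:ℝ) - p) / (p - 1)) ^ p) * (‖x‖ ^ q * (1 + ‖x‖ ^ q) ^ (-(N:ℝ))) := by
        have := Real.rpow_pos_of_pos (div_pos hNp hp1') p
        have := Real.rpow_pos_of_pos hxn q
        have := Real.rpow_pos_of_pos hb (-(N:ℝ))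
        positivity
      exact ne_of_gt this
  refine ⟨goal1, goal2, goal3, goal4, ?_⟩
  -- the scaling constant
  set A : ℝ := ∫ x, ‖fderiv ℝ U x‖ ^ p with hAdef
  set B : ℝ := ∫ x, U x ^ ((N : ℝ) * p / ((N : ℝ) - p)) with hBdef
  set pstar : ℝ := (N : ℝ) * p / ((N : ℝ) - p) with hpsdef
  have hd : 0 < pstar - p := by
    rw [hpsdef, sub_pos, lt_div_iff₀ hNp]; nlinarith
  set C : ℝ := (A / B) ^ ((pstar - p)⁻¹) with hCdef
  have hAB : 0 < A / B := div_pos goal3 goal1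
  have hC : 0 < C := Real.rpow_pos_of_pos hAB _
  refine ⟨C, hC, ?_⟩
  have e1 : (fun x : EuclideanSpace ℝ (Fin N) => ‖fderiv ℝ (fun y => C * U y) x‖ ^ p) =
      fun x => C ^ p * ‖fderiv ℝ U x‖ ^ p := by
    funext x
    rw [fderiv_const_mul (hderiv x).differentiableAt, norm_smul, Real.norm_eq_abs,
      abs_of_pos hC, Real.mul_rpow hC.le (norm_nonneg _)]
  have e2 : (fun x : EuclideanSpace ℝ (Fin N) => (C * U x) ^ pstar) =
      fun x => C ^ pstar * U x ^ pstar := by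
    funext x
    have hUx : (0:ℝ) ≤ U x := by
      rw [hU x]; exact (Real.rpow_pos_of_pos (by positivity) _).le
    rw [Real.mul_rpow hC.le hUx]
  rw [e1, e2, integral_const_mul, integral_const_mul, ← hAdef, ← hBdef]
  have hCd : C ^ (pstar - p) = A / B := by
    rw [hCdef, ← Real.rpow_mul hAB.le, inv_mul_cancel₀ hd.ne', Real.rpow_one]
  calc C ^ p * A = C ^ p * ((A / B) * B) := by rw [div_mul_cancel₀ _ goal1.ne']
    _ = (C ^ p * C ^ (pstar - p)) * B := by rw [hCd]; ring
    _ = C ^ pstar * B := by rw [← Real.rpow_add hC]; ring_nf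
end

section
/- There exists a constant C = C(N,p,η) > 0 such that for all ε ∈ (0,1): ∫_{ℝ^N} |∇ũ_ε|^p dx ≤ S^{N/p} + C ε^{(N−p)/(p−1)}. -/
open MeasureTheory

open Metric Set

section AuxStmt7

variable {E : Type*} [NormedAddCommGroup E] [InnerProductSpace ℝ E]

lemma aux_radial_fderiv {φ : ℝ → ℝ} {d : ℝ} {x : E} (hx : x ≠ 0)
    (hφ : HasDerivAt φ d ‖x‖) :
    ‖fderiv ℝ (fun y : E => φ ‖y‖) x‖ ≤ |d| := by
  have hn : DifferentiableAt ℝ (fun y : E => ‖y‖) x :=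
    (contDiffAt_norm (n := 1) ℝ hx).differentiableAt one_ne_zero
  have h1 : HasFDerivAt (fun y : E => φ ‖y‖)
      (d • fderiv ℝ (fun y : E => ‖y‖) x) x :=
    hφ.comp_hasFDerivAt x hn.hasFDerivAt
  rw [h1.fderiv, norm_smul, Real.norm_eq_abs]
  have h2 : ‖fderiv ℝ (fun y : E => ‖y‖) x‖ ≤ ((1 : NNReal) : ℝ) := by
    have := norm_fderiv_le_of_lipschitz ℝ (x₀ := x) (lipschitzWith_one_norm (E := E))
    simpa using this
  calc |d| * ‖fderiv ℝ (fun y : E => ‖y‖) x‖ ≤ |d| * 1 := by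
        exact mul_le_mul_of_nonneg_left (by simpa using h2) (abs_nonneg d)
    _ = |d| := mul_one _

lemma aux_hasDerivAt_phi {ε r q a c : ℝ} (hε : 0 < ε) (hr : 0 < r) :
    HasDerivAt (fun s : ℝ => c * (1 + (s / ε) ^ q) ^ (-a))
      (c * ((-a) * (1 + (r / ε) ^ q) ^ (-a - 1) * (q * (r / ε) ^ (q - 1) * (1 / ε)))) r := by
  have h1 : HasDerivAt (fun s : ℝ => s / ε) (1 / ε) r := by
    simpa using (hasDerivAt_id r).div_const ε
  have h2 : HasDerivAt (fun t : ℝ => t ^ q) (q * (r / ε) ^ (q - 1)) (r / ε) :=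
    Real.hasDerivAt_rpow_const (Or.inl (div_pos hr hε).ne')
  have h3 : HasDerivAt (fun s : ℝ => (s / ε) ^ q) (q * (r / ε) ^ (q - 1) * (1 / ε)) r := by
    have h := h2.comp r h1; exact h
  have h4 : HasDerivAt (fun s : ℝ => 1 + (s / ε) ^ q) (q * (r / ε) ^ (q - 1) * (1 / ε)) r :=
    h3.const_add 1
  have hpos : (0 : ℝ) < 1 + (r / ε) ^ q := by positivity
  have h5 : HasDerivAt (fun t : ℝ => t ^ (-a)) ((-a) * (1 + (r / ε) ^ q) ^ (-a - 1))
      (1 + (r / ε) ^ q) := Real.hasDerivAt_rpow_const (Or.inl hpos.ne')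
  exact ((h5.comp r h4).const_mul c)

lemma aux_W_le_one {q a t : ℝ} (hq : 1 < q) (ha : 0 < a) (ht : 0 ≤ t) :
    t ^ (q - 1) * (1 + t ^ q) ^ (-a - 1) ≤ 1 := by
  rcases le_or_gt t 1 with h | h
  · have h1 : t ^ (q - 1) ≤ 1 := Real.rpow_le_one ht h (by linarith)
    have h2 : (1 + t ^ q) ^ (-a - 1) ≤ 1 :=
      Real.rpow_le_one_of_one_le_of_nonpos
        (le_add_of_nonneg_right (Real.rpow_nonneg ht q)) (by linarith)
    calc t ^ (q - 1) * (1 + t ^ q) ^ (-a - 1) ≤ 1 * 1 :=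
          mul_le_mul h1 h2 (Real.rpow_nonneg (by positivity) _) zero_le_one
      _ = 1 := by norm_num
  · have ht0 : 0 < t := by linarith
    have h2 : (1 + t ^ q) ^ (-a - 1) ≤ (t ^ q) ^ (-a - 1) :=
      Real.rpow_le_rpow_of_nonpos (by positivity) (by linarith) (by linarith)
    have h3 : (t ^ q) ^ (-a - 1) = t ^ (q * (-a - 1)) := (Real.rpow_mul ht0.le _ _).symm
    calc t ^ (q - 1) * (1 + t ^ q) ^ (-a - 1)
        ≤ t ^ (q - 1) * t ^ (q * (-a - 1)) := by
          rw [← h3]; exact mul_le_mul_of_nonneg_left h2 (by positivity)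
      _ = t ^ (q - 1 + q * (-a - 1)) := (Real.rpow_add ht0 _ _).symm
      _ ≤ 1 := Real.rpow_le_one_of_one_le_of_nonpos h.le (by nlinarith)

lemma aux_W_le_decay {q a t : ℝ} (ha : 0 < a) (hq : 0 < q) (ht : 0 < t) :
    t ^ (q - 1) * (1 + t ^ q) ^ (-a - 1) ≤ t ^ (-(q * a) - 1) := by
  have h2 : (1 + t ^ q) ^ (-a - 1) ≤ (t ^ q) ^ (-a - 1) :=
    Real.rpow_le_rpow_of_nonpos (by positivity) (by linarith) (by linarith)
  have h3 : (t ^ q) ^ (-a - 1) = t ^ (q * (-a - 1)) := (Real.rpow_mul ht.le _ _).symm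
  calc t ^ (q - 1) * (1 + t ^ q) ^ (-a - 1)
      ≤ t ^ (q - 1) * t ^ (q * (-a - 1)) := by
        rw [← h3]; exact mul_le_mul_of_nonneg_left h2 (by positivity)
    _ = t ^ (q - 1 + q * (-a - 1)) := (Real.rpow_add ht _ _).symm
    _ = t ^ (-(q * a) - 1) := by ring_nf

end AuxStmt7

set_option maxHeartbeats 1600000 in
/-- There is a constant C = C(N,p,eta) > 0 such that for all eps in (0,1):
integral of |grad u~_eps|^p <= S^(N/p) + C eps^((N-p)/(p-1)), where u~_eps(x) = eta(|x|) u_eps(x). -/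
theorem stmt_7 (N : ℕ) (hN : 2 ≤ N) (p : ℝ) (hp1 : 1 < p) (hpN : p < (N : ℝ))
    (Cnp : ℝ) (hC : 0 < Cnp)
    (uε : ℝ → EuclideanSpace ℝ (Fin N) → ℝ)
    (huε : ∀ ε > (0 : ℝ), ∀ x, uε ε x = Cnp * ε ^ (-((N : ℝ) - p) / p) *
      (1 + (‖x‖ / ε) ^ (p / (p - 1))) ^ (-((N : ℝ) - p) / p))
    (hnorm : ∀ ε > (0 : ℝ),
      (∫ x, ‖fderiv ℝ (uε ε) x‖ ^ p) = sobolevS N p ^ ((N : ℝ) / p) ∧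
      (∫ x, uε ε x ^ ((N : ℝ) * p / ((N : ℝ) - p))) = sobolevS N p ^ ((N : ℝ) / p))
    (η : ℝ → ℝ) (hη : ContDiff ℝ (⊤ : ℕ∞) η) (hη01 : ∀ s, η s ∈ Set.Icc (0 : ℝ) 1)
    (hη1 : ∀ s ≤ (1 / 4 : ℝ), η s = 1) (hη0 : ∀ s, (1 / 2 : ℝ) ≤ s → η s = 0) :
    ∃ C : ℝ, 0 < C ∧ ∀ ε ∈ Set.Ioo (0 : ℝ) 1,
      (∫ x, ‖fderiv ℝ (fun y => η ‖y‖ * uε ε y) x‖ ^ p) ≤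
        sobolevS N p ^ ((N : ℝ) / p) + C * ε ^ (((N : ℝ) - p) / (p - 1)) := by
  classical
  have hp0 : (0:ℝ) < p := by linarith
  have hp1' : (0:ℝ) < p - 1 := by linarith
  have hNp : (0:ℝ) < (N:ℝ) - p := by linarith
  haveI : Nontrivial (EuclideanSpace ℝ (Fin N)) := by
    apply Module.nontrivial_of_finrank_pos (R := ℝ)
    rw [finrank_euclideanSpace_fin]; omega
  set a : ℝ := ((N:ℝ) - p) / p with ha_def
  set q : ℝ := p / (p - 1) with hq_def
  have ha : 0 < a := div_pos hNp hp0
  have hq : 1 < q := by rw [hq_def, lt_div_iff₀ hp1']; linarith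
  have hq0 : 0 < q := by linarith
  -- bound for the derivative of η on [1/4, 1/2]
  obtain ⟨M, hM⟩ : ∃ M : ℝ, ∀ r ∈ Icc (1/4:ℝ) (1/2), |deriv η r| ≤ M := by
    obtain ⟨M, hM⟩ := (isCompact_Icc (a := (1/4:ℝ)) (b := 1/2)).exists_bound_of_continuousOn
      ((hη.continuous_deriv (by simp)).continuousOn)
    exact ⟨M, fun r hr => by simpa using hM r hr⟩
  have hM0 : 0 ≤ M := le_trans (abs_nonneg _) (hM (1/4) (by constructor <;> norm_num))
  set K : ℝ := Cnp * (M * 4 ^ (q*a) + a * q * 4 ^ (q*a+1)) with hK_def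
  have hK : 0 < K := by
    apply mul_pos hC
    have h1 : (0:ℝ) < a * q * 4 ^ (q*a+1) := by positivity
    have h2 : (0:ℝ) ≤ M * 4 ^ (q*a) := by positivity
    linarith
  set Ab : Set (EuclideanSpace ℝ (Fin N)) := ball 0 (1/2) \ closedBall 0 (1/4) with hAb_def
  set A2 : ℝ := (volume Ab).toReal with hA2_def
  refine ⟨max 1 (K ^ p * A2), lt_of_lt_of_le one_pos (le_max_left _ _), ?_⟩
  rintro ε ⟨hε, hε1⟩
  -- the profile function and its derivative
  set c : ℝ := Cnp * ε ^ (-a) with hc_def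
  have hc : 0 < c := mul_pos hC (Real.rpow_pos_of_pos hε _)
  set φ : ℝ → ℝ := fun r => c * (1 + (r/ε) ^ q) ^ (-a) with hφ_def
  have hux : ∀ x : EuclideanSpace ℝ (Fin N), uε ε x = φ ‖x‖ := by
    intro x
    rw [huε ε hε x, hφ_def]
    simp only [hc_def, ha_def, hq_def, neg_div]
  set D : ℝ → ℝ :=
    fun r => c * ((-a) * (1 + (r/ε)^q)^(-a-1) * (q * (r/ε)^(q-1) * (1/ε))) with hD_def
  have hφ' : ∀ r : ℝ, 0 < r → HasDerivAt φ (D r) r := fun r hr => aux_hasDerivAt_phi hε hr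
  set A : ℝ := c * a * q / ε with hA_def
  have hA : 0 < A := by
    apply div_pos _ hε
    exact mul_pos (mul_pos hc ha) hq0
  have habsD : ∀ r : ℝ, 0 < r → |D r| = A * ((r/ε)^(q-1) * (1+(r/ε)^q)^(-a-1)) := by
    intro r hr
    have h1 : D r = -(A * ((r/ε)^(q-1) * (1+(r/ε)^q)^(-a-1))) := by
      simp only [hD_def, hA_def]; ring
    rw [h1, abs_neg, abs_of_nonneg]
    exact mul_nonneg hA.le (mul_nonneg (Real.rpow_nonneg (by positivity) _)
      (Real.rpow_nonneg (by positivity) _))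
  have hub : ∀ x : EuclideanSpace ℝ (Fin N), x ≠ 0 →
      ‖fderiv ℝ (uε ε) x‖ ≤ A * ((‖x‖/ε)^(q-1) * (1+(‖x‖/ε)^q)^(-a-1)) := by
    intro x hx
    have hrw : uε ε = fun y : EuclideanSpace ℝ (Fin N) => φ ‖y‖ := funext hux
    rw [hrw]
    have hnx : 0 < ‖x‖ := norm_pos_iff.2 hx
    have h := aux_radial_fderiv hx (hφ' ‖x‖ hnx)
    rwa [habsD ‖x‖ hnx] at h
  -- the decay exponent
  set s : ℝ := (q * a + 1) * p with hs_def
  have hs0 : 0 < s := by positivity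
  have hNs : (N:ℝ) < s := by
    have h2 : ((N:ℝ)-p)/p < ((N:ℝ)-p)/(p-1) :=
      div_lt_div_of_pos_left hNp hp1' (by linarith)
    have hqa : q * a = ((N:ℝ) - p)/(p-1) := by
      rw [hq_def, ha_def]; field_simp
    calc (N:ℝ) = (((N:ℝ)-p)/p + 1) * p := by field_simp; ring
      _ < (((N:ℝ)-p)/(p-1) + 1) * p := by
          apply mul_lt_mul_of_pos_right _ hp0
          linarith
      _ = s := by rw [hs_def, hqa]
  -- global pointwise bound for the gradient of uε
  have hGb : ∀ x : EuclideanSpace ℝ (Fin N), x ≠ 0 →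
      ‖fderiv ℝ (uε ε) x‖ ^ p ≤ A ^ p * 2 ^ s * (1 + ‖x‖) ^ (-s) := by
    intro x hx
    have hnx : 0 < ‖x‖ := norm_pos_iff.2 hx
    have ht : 0 < ‖x‖ / ε := div_pos hnx hε
    have hb := hub x hx
    rcases le_or_gt ‖x‖ 1 with hx1 | hx1
    · have hW : (‖x‖/ε)^(q-1) * (1+(‖x‖/ε)^q)^(-a-1) ≤ 1 := aux_W_le_one hq ha ht.le
      have h1 : ‖fderiv ℝ (uε ε) x‖ ≤ A := by
        refine hb.trans ?_
        calc A * ((‖x‖/ε)^(q-1) * (1+(‖x‖/ε)^q)^(-a-1)) ≤ A * 1 :=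
              mul_le_mul_of_nonneg_left hW hA.le
          _ = A := mul_one _
      have h2 : ‖fderiv ℝ (uε ε) x‖ ^ p ≤ A ^ p :=
        Real.rpow_le_rpow (norm_nonneg _) h1 hp0.le
      have h3 : (2:ℝ) ^ (-s) ≤ (1 + ‖x‖) ^ (-s) :=
        Real.rpow_le_rpow_of_nonpos (by linarith) (by linarith) (by linarith)
      calc ‖fderiv ℝ (uε ε) x‖ ^ p ≤ A ^ p := h2
        _ = A ^ p * 2 ^ s * 2 ^ (-s) := by
            rw [mul_assoc, ← Real.rpow_add (by norm_num : (0:ℝ) < 2), add_neg_cancel,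
              Real.rpow_zero, mul_one]
        _ ≤ A ^ p * 2 ^ s * (1+‖x‖)^(-s) := by
            apply mul_le_mul_of_nonneg_left h3
            positivity
    · have hW : (‖x‖/ε)^(q-1) * (1+(‖x‖/ε)^q)^(-a-1) ≤ (‖x‖/ε) ^ (-(q*a)-1) :=
        aux_W_le_decay ha hq0 ht
      have hdiv : (‖x‖/ε) ^ (-(q*a)-1) = ‖x‖ ^ (-(q*a)-1) * ε ^ (q*a+1) := by
        rw [Real.div_rpow hnx.le hε.le]
        have h4 : ε ^ (-(q*a)-1) = (ε ^ (q*a+1))⁻¹ := by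
          rw [show -(q*a)-1 = -(q*a+1) by ring, Real.rpow_neg hε.le]
        rw [h4, division_def, inv_inv]
      have h1 : ‖fderiv ℝ (uε ε) x‖ ≤ A * (ε ^ (q*a+1) * ‖x‖ ^ (-(q*a)-1)) := by
        refine hb.trans ?_
        calc A * ((‖x‖/ε)^(q-1) * (1+(‖x‖/ε)^q)^(-a-1))
            ≤ A * ((‖x‖/ε) ^ (-(q*a)-1)) := mul_le_mul_of_nonneg_left hW hA.le
          _ = A * (ε ^ (q*a+1) * ‖x‖ ^ (-(q*a)-1)) := by rw [hdiv]; ring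
      have h2 : ‖fderiv ℝ (uε ε) x‖ ^ p ≤ (A * (ε ^ (q*a+1) * ‖x‖ ^ (-(q*a)-1))) ^ p :=
        Real.rpow_le_rpow (norm_nonneg _) h1 hp0.le
      have h3 : (A * (ε ^ (q*a+1) * ‖x‖ ^ (-(q*a)-1))) ^ p
          = A ^ p * ((ε ^ (q*a+1)) ^ p * ‖x‖ ^ (-s)) := by
        rw [Real.mul_rpow hA.le (by positivity), Real.mul_rpow (by positivity) (by positivity),
          ← Real.rpow_mul hnx.le]
        congr 2
        rw [hs_def]; ring
      have h4 : (ε ^ (q*a+1)) ^ p ≤ 1 := by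
        apply Real.rpow_le_one (Real.rpow_nonneg hε.le _) _ hp0.le
        exact Real.rpow_le_one hε.le hε1.le (by positivity)
      have h5 : ‖x‖ ^ (-s) ≤ ((1+‖x‖)/2) ^ (-s) :=
        Real.rpow_le_rpow_of_nonpos (by linarith) (by linarith) (by linarith)
      have h6 : ((1+‖x‖)/2) ^ (-s) = 2 ^ s * (1+‖x‖) ^ (-s) := by
        rw [Real.div_rpow (by linarith) (by norm_num)]
        have h7 : (2:ℝ) ^ (-s) = ((2:ℝ) ^ s)⁻¹ := by
          rw [Real.rpow_neg (by norm_num : (0:ℝ) ≤ 2)]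
        rw [h7, division_def, inv_inv]; ring
      calc ‖fderiv ℝ (uε ε) x‖ ^ p ≤ A ^ p * ((ε ^ (q*a+1)) ^ p * ‖x‖ ^ (-s)) := h2.trans_eq h3
        _ ≤ A ^ p * (1 * (2 ^ s * (1+‖x‖) ^ (-s))) := by
            apply mul_le_mul_of_nonneg_left _ (by positivity)
            apply mul_le_mul h4 (h5.trans_eq h6) (Real.rpow_nonneg hnx.le _) zero_le_one
        _ = A ^ p * 2 ^ s * (1+‖x‖)^(-s) := by ring
  -- measurability and integrability of the gradient term of uε
  have hGmeas : Measurable (fun x : EuclideanSpace ℝ (Fin N) => ‖fderiv ℝ (uε ε) x‖ ^ p) :=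
    (continuous_id.rpow_const (fun _ => Or.inr hp0.le)).measurable.comp
      (measurable_fderiv ℝ (uε ε)).norm
  have h0vol : volume ({0} : Set (EuclideanSpace ℝ (Fin N))) = 0 := by
    refine measure_mono_null ?_ (Measure.addHaar_sphere (volume : Measure (EuclideanSpace ℝ (Fin N))) 0 0)
    intro y hy
    simp only [mem_singleton_iff] at hy
    simp [hy]
  have hae0 : ∀ᵐ x : EuclideanSpace ℝ (Fin N) ∂volume, x ≠ 0 := by
    rw [ae_iff]
    have he : {x : EuclideanSpace ℝ (Fin N) | ¬ x ≠ 0} = {0} := by ext y; simp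
    rw [he]; exact h0vol
  have hGint : Integrable (fun x : EuclideanSpace ℝ (Fin N) => ‖fderiv ℝ (uε ε) x‖ ^ p) := by
    have hint : Integrable (fun x : EuclideanSpace ℝ (Fin N) => A ^ p * 2 ^ s * (1 + ‖x‖) ^ (-s)) :=
      (integrable_one_add_norm (by rw [finrank_euclideanSpace_fin]; exact hNs)).const_mul _
    refine hint.mono' hGmeas.aestronglyMeasurable ?_
    filter_upwards [hae0] with x hx
    rw [Real.norm_eq_abs, abs_of_nonneg (Real.rpow_nonneg (norm_nonneg _) _)]
    exact hGb x hx
  -- the truncated function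
  set v : EuclideanSpace ℝ (Fin N) → ℝ := fun y => η ‖y‖ * uε ε y with hv_def
  set F : EuclideanSpace ℝ (Fin N) → ℝ := fun x => ‖fderiv ℝ v x‖ ^ p with hF_def
  have hFnonneg : ∀ x, 0 ≤ F x := fun x => Real.rpow_nonneg (norm_nonneg _) _
  have hFmeas : Measurable F :=
    (continuous_id.rpow_const (fun _ => Or.inr hp0.le)).measurable.comp
      (measurable_fderiv ℝ v).norm
  -- outside the ball of radius 1/2 the function vanishes
  have hF0 : ∀ x : EuclideanSpace ℝ (Fin N), (1/2:ℝ) < ‖x‖ → F x = 0 := by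
    intro x hx
    have hopen : IsOpen {y : EuclideanSpace ℝ (Fin N) | (1/2:ℝ) < ‖y‖} :=
      isOpen_lt continuous_const continuous_norm
    have hEq : v =ᶠ[nhds x] (fun _ => (0:ℝ)) := by
      filter_upwards [hopen.mem_nhds hx] with y hy
      simp only [hv_def, hη0 _ (le_of_lt hy), zero_mul]
    simp only [hF_def]
    rw [hEq.fderiv_eq]
    simp [Real.zero_rpow hp0.ne']
  -- inside the ball of radius 1/4 the gradients agree
  have hFG : ∀ x : EuclideanSpace ℝ (Fin N), ‖x‖ < 1/4 → F x = ‖fderiv ℝ (uε ε) x‖ ^ p := by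
    intro x hx
    have hopen : IsOpen {y : EuclideanSpace ℝ (Fin N) | ‖y‖ < 1/4} :=
      isOpen_lt continuous_norm continuous_const
    have hEq : v =ᶠ[nhds x] uε ε := by
      filter_upwards [hopen.mem_nhds hx] with y hy
      simp only [hv_def, hη1 _ (le_of_lt hy), one_mul]
    simp only [hF_def]
    rw [hEq.fderiv_eq]
  -- on the annulus the gradient is small
  have hFA : ∀ x : EuclideanSpace ℝ (Fin N), 1/4 < ‖x‖ → ‖x‖ < 1/2 →
      F x ≤ (K * ε ^ (a*(q-1))) ^ p := by
    intro x hx1 hx2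
    have hnx : (0:ℝ) < ‖x‖ := by linarith
    have hxne : x ≠ 0 := by
      intro h; rw [h, norm_zero] at hnx; exact lt_irrefl _ hnx
    have ht : 0 < ‖x‖ / ε := div_pos hnx hε
    have hrw : v = fun y : EuclideanSpace ℝ (Fin N) => (fun r => η r * φ r) ‖y‖ := by
      funext y; simp only [hv_def]; rw [hux y]
    have hηd : HasDerivAt η (deriv η ‖x‖) ‖x‖ := (hη.differentiable (by simp) ‖x‖).hasDerivAt
    have hder : HasDerivAt (fun r => η r * φ r)
        (deriv η ‖x‖ * φ ‖x‖ + η ‖x‖ * D ‖x‖) ‖x‖ := hηd.mul (hφ' ‖x‖ hnx)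
    have hb2 : ‖fderiv ℝ v x‖ ≤ |deriv η ‖x‖ * φ ‖x‖ + η ‖x‖ * D ‖x‖| := by
      rw [hrw]; exact aux_radial_fderiv hxne hder
    -- bound φ
    have hq_a : (0:ℝ) < (‖x‖/ε)^q := Real.rpow_pos_of_pos ht _
    have hεrw : ε ^ (-a) * ε ^ (q*a) = ε ^ (a*(q-1)) := by
      rw [← Real.rpow_add hε, show -a + q*a = a*(q-1) by ring]
    have hinv4 : ∀ e : ℝ, 0 ≤ e → ‖x‖ ^ (-e) ≤ 4 ^ e := by
      intro e he
      have h1 : ‖x‖ ^ (-e) ≤ ((1:ℝ)/4) ^ (-e) :=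
        Real.rpow_le_rpow_of_nonpos (by norm_num) (by linarith) (by linarith)
      have h2 : ((1:ℝ)/4) ^ (-e) = 4 ^ e := by
        rw [one_div, Real.inv_rpow (by norm_num : (0:ℝ) ≤ 4), Real.rpow_neg (by norm_num), inv_inv]
      rw [h2] at h1; exact h1
    have hφb : φ ‖x‖ ≤ Cnp * ε ^ (a*(q-1)) * 4 ^ (q*a) := by
      have h1 : (1 + (‖x‖/ε)^q) ^ (-a) ≤ ((‖x‖/ε)^q) ^ (-a) :=
        Real.rpow_le_rpow_of_nonpos hq_a (by linarith) (by linarith)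
      have h2 : ((‖x‖/ε)^q) ^ (-a) = ‖x‖ ^ (-(q*a)) * ε ^ (q*a) := by
        rw [← Real.rpow_mul ht.le, Real.div_rpow hnx.le hε.le,
          show q * (-a) = -(q*a) by ring]
        rw [show ε ^ (-(q*a)) = (ε ^ (q*a))⁻¹ by rw [Real.rpow_neg hε.le],
          division_def, inv_inv]
      have h3 : ‖x‖ ^ (-(q*a)) ≤ 4 ^ (q*a) := hinv4 (q*a) (by positivity)
      calc φ ‖x‖ = c * (1 + (‖x‖/ε)^q) ^ (-a) := by rw [hφ_def]
        _ ≤ c * (‖x‖ ^ (-(q*a)) * ε ^ (q*a)) := by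
            rw [← h2]; exact mul_le_mul_of_nonneg_left h1 hc.le
        _ ≤ c * (4 ^ (q*a) * ε ^ (q*a)) := by
            apply mul_le_mul_of_nonneg_left _ hc.le
            exact mul_le_mul_of_nonneg_right h3 (Real.rpow_nonneg hε.le _)
        _ = Cnp * (ε ^ (-a) * ε ^ (q*a)) * 4 ^ (q*a) := by rw [hc_def]; ring
        _ = Cnp * ε ^ (a*(q-1)) * 4 ^ (q*a) := by rw [hεrw]
    have hφnn : 0 ≤ φ ‖x‖ := by
      rw [hφ_def]
      exact mul_nonneg hc.le (Real.rpow_nonneg (by positivity) _)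
    -- bound D
    have hDb : |D ‖x‖| ≤ Cnp * a * q * ε ^ (a*(q-1)) * 4 ^ (q*a+1) := by
      rw [habsD ‖x‖ hnx]
      have hW : (‖x‖/ε)^(q-1) * (1+(‖x‖/ε)^q)^(-a-1) ≤ (‖x‖/ε) ^ (-(q*a)-1) :=
        aux_W_le_decay ha hq0 ht
      have hdiv : (‖x‖/ε) ^ (-(q*a)-1) = ‖x‖ ^ (-(q*a)-1) * ε ^ (q*a+1) := by
        rw [Real.div_rpow hnx.le hε.le]
        rw [show ε ^ (-(q*a)-1) = (ε ^ (q*a+1))⁻¹ by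
          rw [show -(q*a)-1 = -(q*a+1) by ring, Real.rpow_neg hε.le]]
        rw [division_def, inv_inv]
      have h3 : ‖x‖ ^ (-(q*a)-1) ≤ 4 ^ (q*a+1) := by
        have := hinv4 (q*a+1) (by positivity)
        rwa [show -(q*a+1) = -(q*a)-1 by ring] at this
      have hεrw2 : A * ε ^ (q*a+1) = Cnp * a * q * ε ^ (a*(q-1)) := by
        have e1 : ε ^ (-a) * ε ^ (q*a+1) = ε ^ (-a + (q*a+1)) := (Real.rpow_add hε _ _).symm
        have e2 : ε ^ (-a + (q*a+1)) * ε ^ (-1:ℝ) = ε ^ (-a + (q*a+1) + -1) :=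
          (Real.rpow_add hε _ _).symm
        have e3 : -a + (q*a+1) + (-1:ℝ) = a*(q-1) := by ring
        calc A * ε ^ (q*a+1)
            = Cnp * a * q * (ε ^ (-a) * ε ^ (q*a+1) * ε ^ (-1:ℝ)) := by
              rw [hA_def, hc_def, Real.rpow_neg_one]; ring
          _ = Cnp * a * q * ε ^ (a*(q-1)) := by rw [e1, e2, e3]
      calc A * ((‖x‖/ε)^(q-1) * (1+(‖x‖/ε)^q)^(-a-1))
          ≤ A * ((‖x‖/ε) ^ (-(q*a)-1)) := mul_le_mul_of_nonneg_left hW hA.le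
        _ = A * ε ^ (q*a+1) * ‖x‖ ^ (-(q*a)-1) := by rw [hdiv]; ring
        _ ≤ A * ε ^ (q*a+1) * 4 ^ (q*a+1) := by
            apply mul_le_mul_of_nonneg_left h3
            exact mul_nonneg hA.le (Real.rpow_nonneg hε.le _)
        _ = Cnp * a * q * ε ^ (a*(q-1)) * 4 ^ (q*a+1) := by rw [hεrw2]
    -- combine
    have hηb : |η ‖x‖| ≤ 1 := by
      have h := hη01 ‖x‖
      rw [abs_le]; exact ⟨by linarith [h.1], h.2⟩
    have hηd_b : |deriv η ‖x‖| ≤ M := hM ‖x‖ ⟨hx1.le, hx2.le⟩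
    have habs : |deriv η ‖x‖ * φ ‖x‖ + η ‖x‖ * D ‖x‖| ≤ K * ε ^ (a*(q-1)) := by
      calc |deriv η ‖x‖ * φ ‖x‖ + η ‖x‖ * D ‖x‖|
          ≤ |deriv η ‖x‖ * φ ‖x‖| + |η ‖x‖ * D ‖x‖| := abs_add_le _ _
        _ = |deriv η ‖x‖| * φ ‖x‖ + |η ‖x‖| * |D ‖x‖| := by
            rw [abs_mul (deriv η ‖x‖) (φ ‖x‖), abs_mul (η ‖x‖) (D ‖x‖), abs_of_nonneg hφnn]
        _ ≤ M * (Cnp * ε ^ (a*(q-1)) * 4 ^ (q*a)) +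
            1 * (Cnp * a * q * ε ^ (a*(q-1)) * 4 ^ (q*a+1)) := by
            apply add_le_add
            · exact mul_le_mul hηd_b hφb hφnn hM0
            · exact mul_le_mul hηb hDb (abs_nonneg _) zero_le_one
        _ = K * ε ^ (a*(q-1)) := by rw [hK_def]; ring
    have h1 : F x ≤ |deriv η ‖x‖ * φ ‖x‖ + η ‖x‖ * D ‖x‖| ^ p := by
      simp only [hF_def]
      exact Real.rpow_le_rpow (norm_nonneg _) hb2 hp0.le
    refine h1.trans (Real.rpow_le_rpow (abs_nonneg _) habs hp0.le)
  -- assembling the integral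
  have hsub : closedBall (0:EuclideanSpace ℝ (Fin N)) (1/4) ⊆ ball 0 (1/2) :=
    closedBall_subset_ball (by norm_num)
  have hAbm : MeasurableSet Ab := measurableSet_ball.diff measurableSet_closedBall
  have hAbvol : volume Ab < ⊤ :=
    lt_of_le_of_lt (measure_mono diff_subset) measure_ball_lt_top
  -- F is a.e. equal to its restriction to the ball of radius 1/2
  have hind : F =ᵐ[volume] (ball (0:EuclideanSpace ℝ (Fin N)) (1/2)).indicator F := by
    have hsub2 : {x : EuclideanSpace ℝ (Fin N) |
        ¬ F x = (ball (0:EuclideanSpace ℝ (Fin N)) (1/2)).indicator F x} ⊆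
        sphere (0:EuclideanSpace ℝ (Fin N)) (1/2) := by
      intro x hx
      simp only [mem_setOf_eq] at hx
      by_cases hxb : x ∈ ball (0:EuclideanSpace ℝ (Fin N)) (1/2)
      · exact absurd (by rw [indicator_of_mem hxb]) hx
      · rw [indicator_of_notMem hxb] at hx
        have h1 : (1/2:ℝ) ≤ ‖x‖ := by
          by_contra h
          exact hxb (mem_ball_zero_iff.2 (by linarith))
        rcases eq_or_lt_of_le h1 with h2 | h2
        · exact mem_sphere_zero_iff_norm.2 h2.symm
        · exact absurd (hF0 x h2) hx
    exact ae_iff.2 (measure_mono_null hsub2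
      (Measure.addHaar_sphere (volume : Measure (EuclideanSpace ℝ (Fin N))) 0 (1/2)))
  -- F agrees a.e. with the gradient of uε on the small closed ball
  have hFGae : F =ᵐ[volume.restrict (closedBall (0:EuclideanSpace ℝ (Fin N)) (1/4))]
      (fun x => ‖fderiv ℝ (uε ε) x‖ ^ p) := by
    have hsub3 : {x : EuclideanSpace ℝ (Fin N) |
        ¬ (x ∈ closedBall (0:EuclideanSpace ℝ (Fin N)) (1/4) →
          F x = ‖fderiv ℝ (uε ε) x‖ ^ p)} ⊆
        sphere (0:EuclideanSpace ℝ (Fin N)) (1/4) := by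
      intro x hx
      simp only [mem_setOf_eq, Classical.not_imp] at hx
      obtain ⟨hxB, hxne⟩ := hx
      have h1 : ‖x‖ ≤ 1/4 := mem_closedBall_zero_iff.1 hxB
      rcases lt_or_eq_of_le h1 with h2 | h2
      · exact absurd (hFG x h2) hxne
      · exact mem_sphere_zero_iff_norm.2 h2
    have h3 : ∀ᵐ x ∂(volume : Measure (EuclideanSpace ℝ (Fin N))),
        x ∈ closedBall (0:EuclideanSpace ℝ (Fin N)) (1/4) →
          F x = ‖fderiv ℝ (uε ε) x‖ ^ p :=
      ae_iff.2 (measure_mono_null hsub3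
        (Measure.addHaar_sphere (volume : Measure (EuclideanSpace ℝ (Fin N))) 0 (1/4)))
    exact (ae_restrict_iff' measurableSet_closedBall).2 h3
  have hFBc_int : IntegrableOn F (closedBall (0:EuclideanSpace ℝ (Fin N)) (1/4)) :=
    hGint.integrableOn.congr hFGae.symm
  have hFAb_int : IntegrableOn F Ab := by
    apply Measure.integrableOn_of_bounded hAbvol.ne hFmeas.aestronglyMeasurable
    rw [ae_restrict_iff' hAbm]
    refine ae_of_all _ fun x hx => ?_
    obtain ⟨hx1, hx2⟩ := hx
    have h1 : ‖x‖ < 1/2 := mem_ball_zero_iff.1 hx1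
    have h2 : 1/4 < ‖x‖ := by
      by_contra h
      exact hx2 (mem_closedBall_zero_iff.2 (by linarith))
    rw [Real.norm_eq_abs, abs_of_nonneg (hFnonneg x)]
    exact hFA x h2 h1
  have hSplit : ∫ x, F x = (∫ x in closedBall (0:EuclideanSpace ℝ (Fin N)) (1/4), F x)
      + ∫ x in Ab, F x := by
    rw [integral_congr_ae hind, integral_indicator measurableSet_ball,
      show ball (0:EuclideanSpace ℝ (Fin N)) (1/2)
        = closedBall (0:EuclideanSpace ℝ (Fin N)) (1/4) ∪ Ab from (union_diff_cancel hsub).symm]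
    exact setIntegral_union disjoint_sdiff_right hAbm hFBc_int hFAb_int
  have hBc_le : ∫ x in closedBall (0:EuclideanSpace ℝ (Fin N)) (1/4), F x
      ≤ sobolevS N p ^ ((N : ℝ) / p) := by
    rw [integral_congr_ae hFGae]
    calc ∫ x in closedBall (0:EuclideanSpace ℝ (Fin N)) (1/4), ‖fderiv ℝ (uε ε) x‖ ^ p
        ≤ ∫ x, ‖fderiv ℝ (uε ε) x‖ ^ p :=
          setIntegral_le_integral hGint
            (ae_of_all _ fun x => Real.rpow_nonneg (norm_nonneg _) _)
      _ = sobolevS N p ^ ((N : ℝ) / p) := (hnorm ε hε).1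
  have hAb_le : ∫ x in Ab, F x ≤ (K * ε ^ (a*(q-1))) ^ p * A2 := by
    have hbd : ∀ᵐ x ∂(volume : Measure (EuclideanSpace ℝ (Fin N))),
        x ∈ Ab → ‖F x‖ ≤ (K * ε ^ (a*(q-1))) ^ p := by
      refine ae_of_all _ fun x hx => ?_
      obtain ⟨hx1, hx2⟩ := hx
      have h1 : ‖x‖ < 1/2 := mem_ball_zero_iff.1 hx1
      have h2 : 1/4 < ‖x‖ := by
        by_contra h
        exact hx2 (mem_closedBall_zero_iff.2 (by linarith))
      rw [Real.norm_eq_abs, abs_of_nonneg (hFnonneg x)]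
      exact hFA x h2 h1
    have h4 : _ ≤ _ * (volume Ab).toReal := norm_setIntegral_le_of_norm_le_const_ae' hAbvol hbd
    rw [hA2_def]
    exact le_trans (le_abs_self _) (by simpa [Real.norm_eq_abs] using h4)
  have hpow : (K * ε ^ (a*(q-1))) ^ p * A2
      ≤ max 1 (K ^ p * A2) * ε ^ (((N : ℝ) - p) / (p - 1)) := by
    have h9 : (K * ε ^ (a*(q-1))) ^ p = K ^ p * ε ^ (((N : ℝ) - p) / (p - 1)) := by
      have hexp : a*(q-1)*p = ((N:ℝ)-p)/(p-1) := by
        rw [ha_def, hq_def]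
        field_simp
        ring
      rw [Real.mul_rpow hK.le (Real.rpow_nonneg hε.le _), ← Real.rpow_mul hε.le, hexp]
    rw [h9]
    have hA2nn : 0 ≤ A2 := ENNReal.toReal_nonneg
    calc K ^ p * ε ^ (((N : ℝ) - p) / (p - 1)) * A2
        = (K ^ p * A2) * ε ^ (((N : ℝ) - p) / (p - 1)) := by ring
      _ ≤ max 1 (K ^ p * A2) * ε ^ (((N : ℝ) - p) / (p - 1)) :=
          mul_le_mul_of_nonneg_right (le_max_right _ _) (Real.rpow_nonneg hε.le _)
  calc ∫ x, F x = (∫ x in closedBall (0:EuclideanSpace ℝ (Fin N)) (1/4), F x)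
      + ∫ x in Ab, F x := hSplit
    _ ≤ sobolevS N p ^ ((N : ℝ) / p) + max 1 (K ^ p * A2) * ε ^ (((N : ℝ) - p) / (p - 1)) :=
        add_le_add hBc_le (hAb_le.trans hpow)
end

section
/- There exists a constant C = C(N,p,η) > 0 such that for all ε ∈ (0,1): ∫_{ℝ^N} ũ_ε^{p*} dx ≥ S^{N/p} − C ε^{N/(p−1)}. -/
open MeasureTheory

set_option maxHeartbeats 1000000 in
/-- There is a constant C = C(N,p,eta) > 0 such that for all eps in (0,1):
integral of u~_eps^(p*) >= S^(N/p) - C eps^(N/(p-1)), where u~_eps(x) = eta(|x|) u_eps(x). -/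
theorem stmt_8 (N : ℕ) (hN : 2 ≤ N) (p : ℝ) (hp1 : 1 < p) (hpN : p < (N : ℝ))
    (Cnp : ℝ) (hC : 0 < Cnp)
    (uε : ℝ → EuclideanSpace ℝ (Fin N) → ℝ)
    (huε : ∀ ε > (0 : ℝ), ∀ x, uε ε x = Cnp * ε ^ (-((N : ℝ) - p) / p) *
      (1 + (‖x‖ / ε) ^ (p / (p - 1))) ^ (-((N : ℝ) - p) / p))
    (hnorm : ∀ ε > (0 : ℝ),
      (∫ x, ‖fderiv ℝ (uε ε) x‖ ^ p) = sobolevS N p ^ ((N : ℝ) / p) ∧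
      (∫ x, uε ε x ^ ((N : ℝ) * p / ((N : ℝ) - p))) = sobolevS N p ^ ((N : ℝ) / p))
    (η : ℝ → ℝ) (hη : ContDiff ℝ (⊤ : ℕ∞) η) (hη01 : ∀ s, η s ∈ Set.Icc (0 : ℝ) 1)
    (hη1 : ∀ s ≤ (1 / 4 : ℝ), η s = 1) (hη0 : ∀ s, (1 / 2 : ℝ) ≤ s → η s = 0) :
    ∃ C : ℝ, 0 < C ∧ ∀ ε ∈ Set.Ioo (0 : ℝ) 1,
      (∫ x, (η ‖x‖ * uε ε x) ^ ((N : ℝ) * p / ((N : ℝ) - p))) ≥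
        sobolevS N p ^ ((N : ℝ) / p) - C * ε ^ ((N : ℝ) / (p - 1)) := by
  have hp0 : (0:ℝ) < p := by linarith
  have hp1' : (0:ℝ) < p - 1 := by linarith
  have hNp : (0:ℝ) < (N : ℝ) - p := by linarith
  have hN0 : (0:ℝ) < (N : ℝ) := by linarith
  set pc : ℝ := (N : ℝ) * p / ((N : ℝ) - p) with hpc_def
  set q : ℝ := p / (p - 1) with hq_def
  set a : ℝ := -((N : ℝ) - p) / p with ha_def
  set r : ℝ := (N : ℝ) * p / (p - 1) with hr_def
  have hpc : 0 < pc := by positivity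
  have hq : 0 < q := by positivity
  have hr0 : 0 < r := by positivity
  have hrN : (N : ℝ) < r := by
    rw [hr_def, lt_div_iff₀ hp1']; nlinarith
  have hapc : a * pc = -(N : ℝ) := by
    rw [ha_def, hpc_def]; field_simp
  have hqN : q * -(N : ℝ) = -r := by
    rw [hq_def, hr_def]; ring
  have hsum : -(N : ℝ) + r = (N : ℝ) / (p - 1) := by
    rw [hr_def]; field_simp; ring
  -- the dominating integrable profile
  have hint1 : Integrable (fun x : EuclideanSpace ℝ (Fin N) => (1 + ‖x‖) ^ (-r)) := by
    apply integrable_one_add_norm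
    rwa [finrank_euclideanSpace_fin]
  set I : ℝ := ∫ x : EuclideanSpace ℝ (Fin N), (1 + ‖x‖) ^ (-r) with hI_def
  have hI : 0 ≤ I :=
    integral_nonneg fun x => Real.rpow_nonneg (by positivity) _
  set M : ℝ := Cnp ^ pc * 5 ^ r with hM_def
  have hM : 0 < M := by positivity
  refine ⟨M * I + 1, by nlinarith, ?_⟩
  intro ε hε
  obtain ⟨hε0, hε1⟩ := hε
  have hu : ∀ x, uε ε x = Cnp * ε ^ a * (1 + (‖x‖ / ε) ^ q) ^ a := huε ε hε0
  have hupos : ∀ x, 0 < uε ε x := by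
    intro x; rw [hu x]
    have : (0:ℝ) < 1 + (‖x‖ / ε) ^ q := by positivity
    positivity
  -- continuity of `uε ε`
  have hcont : Continuous (uε ε) := by
    have h1 : Continuous fun x : EuclideanSpace ℝ (Fin N) => 1 + (‖x‖ / ε) ^ q :=
      continuous_const.add ((Real.continuous_rpow_const hq.le).comp (continuous_norm.div_const ε))
    have h2 : Continuous fun x : EuclideanSpace ℝ (Fin N) => (1 + (‖x‖ / ε) ^ q) ^ a := by
      rw [continuous_iff_continuousAt]
      intro x
      exact (Real.continuousAt_rpow_const _ _ (Or.inl (by positivity))).comp h1.continuousAt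
    have : Continuous fun x : EuclideanSpace ℝ (Fin N) =>
        Cnp * ε ^ a * (1 + (‖x‖ / ε) ^ q) ^ a := continuous_const.mul h2
    rwa [show uε ε = fun x => Cnp * ε ^ a * (1 + (‖x‖ / ε) ^ q) ^ a from funext hu]
  have hcont_til : Continuous fun x : EuclideanSpace ℝ (Fin N) => (η ‖x‖ * uε ε x) ^ pc :=
    (Real.continuous_rpow_const hpc.le).comp (((hη.continuous).comp continuous_norm).mul hcont)
  -- the truncated function is integrable (compact support)
  have hint_til : Integrable fun x : EuclideanSpace ℝ (Fin N) => (η ‖x‖ * uε ε x) ^ pc := by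
    apply hcont_til.integrable_of_hasCompactSupport
    apply HasCompactSupport.intro (isCompact_closedBall (0 : EuclideanSpace ℝ (Fin N)) 1)
    intro x hx
    have hx1 : (1:ℝ) < ‖x‖ := by
      simpa [Metric.mem_closedBall, dist_zero_right] using hx
    rw [hη0 ‖x‖ (by linarith), zero_mul, Real.zero_rpow hpc.ne']
  -- the error term
  set φ : EuclideanSpace ℝ (Fin N) → ℝ :=
    fun x => uε ε x ^ pc - (η ‖x‖ * uε ε x) ^ pc with hφ_def
  have hφ0 : ∀ x, 0 ≤ φ x := by
    intro x
    have h1 : 0 ≤ η ‖x‖ * uε ε x := mul_nonneg (hη01 _).1 (hupos x).le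
    have h2 : η ‖x‖ * uε ε x ≤ uε ε x := by
      have := (hη01 ‖x‖).2
      nlinarith [hupos x]
    exact sub_nonneg.2 (Real.rpow_le_rpow h1 h2 hpc.le)
  have hεt : 0 < ε ^ ((N : ℝ) / (p - 1)) := Real.rpow_pos_of_pos hε0 _
  -- the key pointwise bound
  have hφle : ∀ x, φ x ≤ ε ^ ((N : ℝ) / (p - 1)) * M * (1 + ‖x‖) ^ (-r) := by
    intro x
    by_cases hx : ‖x‖ ≤ 1 / 4
    · rw [hφ_def]
      simp only [hη1 _ hx, one_mul, sub_self]
      positivity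
    · push_neg at hx
      have hx0 : (0:ℝ) < ‖x‖ := by linarith
      have hxε : (0:ℝ) < ‖x‖ / ε := div_pos hx0 hε0
      have hB : (0:ℝ) < (‖x‖ / ε) ^ q := Real.rpow_pos_of_pos hxε q
      have hnorm5 : ‖x‖ ^ (-r) ≤ 5 ^ r * (1 + ‖x‖) ^ (-r) := by
        have h5 : 1 + ‖x‖ ≤ 5 * ‖x‖ := by linarith
        have h2 : (5 * ‖x‖) ^ (-r) ≤ (1 + ‖x‖) ^ (-r) :=
          Real.rpow_le_rpow_of_nonpos (by positivity) h5 (by linarith)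
        have h3 : (5 * ‖x‖ : ℝ) ^ (-r) = 5 ^ (-r) * ‖x‖ ^ (-r) :=
          Real.mul_rpow (by norm_num) (norm_nonneg x)
        calc ‖x‖ ^ (-r) = 5 ^ r * (5 * ‖x‖ : ℝ) ^ (-r) := by
              rw [h3, ← mul_assoc, ← Real.rpow_add (by norm_num : (0:ℝ) < 5),
                add_neg_cancel, Real.rpow_zero, one_mul]
          _ ≤ 5 ^ r * (1 + ‖x‖) ^ (-r) :=
              mul_le_mul_of_nonneg_left h2 (Real.rpow_nonneg (by norm_num) _)
      have hB1 : (0:ℝ) ≤ 1 + (‖x‖ / ε) ^ q := by positivity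
      calc φ x ≤ uε ε x ^ pc :=
            sub_le_self _ (Real.rpow_nonneg (mul_nonneg (hη01 _).1 (hupos x).le) _)
        _ = Cnp ^ pc * ε ^ (-(N:ℝ)) * (1 + (‖x‖ / ε) ^ q) ^ (-(N:ℝ)) := by
            rw [hu x,
              Real.mul_rpow (mul_nonneg hC.le (Real.rpow_nonneg hε0.le _))
                (Real.rpow_nonneg hB1 _),
              Real.mul_rpow hC.le (Real.rpow_nonneg hε0.le _),
              ← Real.rpow_mul hε0.le, ← Real.rpow_mul hB1, hapc]
        _ ≤ Cnp ^ pc * ε ^ (-(N:ℝ)) * ((‖x‖ / ε) ^ q) ^ (-(N:ℝ)) := by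
            apply mul_le_mul_of_nonneg_left
            · exact Real.rpow_le_rpow_of_nonpos hB (by linarith) (by linarith)
            · positivity
        _ = Cnp ^ pc * ε ^ (-(N:ℝ)) * (‖x‖ ^ (-r) * ε ^ r) := by
            rw [← Real.rpow_mul hxε.le, hqN, Real.div_rpow (norm_nonneg x) hε0.le,
              Real.rpow_neg hε0.le r, div_inv_eq_mul]
        _ = Cnp ^ pc * (ε ^ (-(N:ℝ)) * ε ^ r) * ‖x‖ ^ (-r) := by ring
        _ = Cnp ^ pc * ε ^ ((N:ℝ) / (p - 1)) * ‖x‖ ^ (-r) := by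
            rw [← Real.rpow_add hε0, hsum]
        _ ≤ Cnp ^ pc * ε ^ ((N:ℝ) / (p - 1)) * (5 ^ r * (1 + ‖x‖) ^ (-r)) := by
            apply mul_le_mul_of_nonneg_left hnorm5
            positivity
        _ = ε ^ ((N:ℝ) / (p - 1)) * M * (1 + ‖x‖) ^ (-r) := by rw [hM_def]; ring
  -- integrability of the error term
  have hint_g : Integrable (fun x : EuclideanSpace ℝ (Fin N) =>
      ε ^ ((N:ℝ) / (p - 1)) * M * (1 + ‖x‖) ^ (-r)) := hint1.const_mul _
  have hcont_φ : Continuous φ := by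
    apply Continuous.sub _ hcont_til
    exact (Real.continuous_rpow_const hpc.le).comp hcont
  have hint_φ : Integrable φ := by
    apply hint_g.mono' hcont_φ.aestronglyMeasurable
    filter_upwards with x
    rw [Real.norm_eq_abs, abs_of_nonneg (hφ0 x)]
    exact hφle x
  -- splitting the integral
  have hsplit : (∫ x, uε ε x ^ pc) = (∫ x, (η ‖x‖ * uε ε x) ^ pc) + ∫ x, φ x := by
    rw [← integral_add hint_til hint_φ]
    apply integral_congr_ae
    filter_upwards with x
    rw [hφ_def]; ring
  have hφint_le : (∫ x, φ x) ≤ ε ^ ((N:ℝ) / (p - 1)) * M * I := by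
    calc (∫ x, φ x) ≤ ∫ x, ε ^ ((N:ℝ) / (p - 1)) * M * (1 + ‖x‖) ^ (-r) :=
          integral_mono hint_φ hint_g hφle
      _ = ε ^ ((N:ℝ) / (p - 1)) * M * I := by
          rw [hI_def, integral_const_mul]
  have hval : (∫ x, uε ε x ^ pc) = sobolevS N p ^ ((N : ℝ) / p) := (hnorm ε hε0).2
  have : (∫ x, (η ‖x‖ * uε ε x) ^ pc) =
      sobolevS N p ^ ((N : ℝ) / p) - ∫ x, φ x := by
    rw [← hval, hsplit]; ring
  rw [ge_iff_le, this]
  have : ε ^ ((N:ℝ) / (p - 1)) * M * I ≤ (M * I + 1) * ε ^ ((N:ℝ) / (p - 1)) := by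
    nlinarith
  linarith
end

section
/- Assume N = p². Then there exist a constant C = C(N,p,η) > 0 and ε₀ ∈ (0,1) such that for all ε ∈ (0,ε₀): ∫_{ℝ^N} ũ_ε^{p} dx ≥ ε^p |log ε| / C. -/
open MeasureTheory

private lemma rpow_helper {c e t : ℝ} (hc : 0 ≤ c) (he : 0 ≤ e) (ht : 0 ≤ t) (x y : ℝ) :
    (c * e ^ x * t ^ x) ^ y = c ^ y * e ^ (x * y) * t ^ (x * y) := by
  rw [Real.mul_rpow (by positivity) (by positivity), Real.mul_rpow hc (by positivity),
    ← Real.rpow_mul he, ← Real.rpow_mul ht]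

private lemma key_ineq {N : ℕ} {p : ℝ} (hp1 : 1 < p) (hpN : p < (N : ℝ))
    (hNp2 : (N : ℝ) = p ^ 2) {Cnp : ℝ} (hC : 0 < Cnp) {ε r : ℝ} (hε : 0 < ε) (hr : ε < r) :
    Cnp ^ p * 2 ^ (p - (N : ℝ)) * ε ^ p * r ^ (-(N : ℝ)) ≤
      (Cnp * ε ^ (-((N : ℝ) - p) / p) * (1 + (r / ε) ^ (p / (p - 1))) ^ (-((N : ℝ) - p) / p)) ^ p := by
  have hp0 : (0:ℝ) < p := by linarith
  have hp1' : (0:ℝ) < p - 1 := by linarith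
  have hr0 : 0 < r := hε.trans hr
  set q : ℝ := p / (p - 1) with hq
  set a : ℝ := -((N : ℝ) - p) / p with ha
  have hs1 : 1 < r / ε := (one_lt_div hε).2 hr
  set t : ℝ := (r / ε) ^ q with htdef
  have ht1 : 1 ≤ t := Real.one_le_rpow hs1.le (by positivity)
  have ht0 : 0 < t := lt_of_lt_of_le one_pos ht1
  have hanp : a ≤ 0 := by
    rw [ha, neg_div]
    exact neg_nonpos.2 (div_nonneg (by linarith) hp0.le)
  have hap : a * p = p - (N : ℝ) := by
    rw [ha]; field_simp; ring
  have hqpN : q * (p - (N : ℝ)) = -(N : ℝ) := by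
    rw [hq, hNp2]; field_simp; ring
  have step1 : (2 * t) ^ a ≤ (1 + t) ^ a :=
    Real.rpow_le_rpow_of_nonpos (by linarith) (by linarith) hanp
  have step2 : Cnp * ε ^ a * (2 * t) ^ a ≤ Cnp * ε ^ a * (1 + t) ^ a :=
    mul_le_mul_of_nonneg_left step1 (by positivity)
  have step3 : (Cnp * ε ^ a * (2 * t) ^ a) ^ p ≤ (Cnp * ε ^ a * (1 + t) ^ a) ^ p :=
    Real.rpow_le_rpow (by positivity) step2 hp0.le
  have heq : (Cnp * ε ^ a * (2 * t) ^ a) ^ p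
      = Cnp ^ p * 2 ^ (p - (N : ℝ)) * ε ^ p * r ^ (-(N : ℝ)) := by
    rw [rpow_helper hC.le hε.le (by positivity), hap,
      Real.mul_rpow (by norm_num) ht0.le, htdef, ← Real.rpow_mul (by positivity), hqpN,
      Real.div_rpow hr0.le hε.le, Real.rpow_neg hε.le (N : ℝ), div_inv_eq_mul]
    have hsplit : ε ^ (p - (N:ℝ)) * ε ^ (N:ℝ) = ε ^ p := by
      rw [← Real.rpow_add hε]; norm_num
    calc Cnp ^ p * ε ^ (p - (N:ℝ)) * (2 ^ (p - (N:ℝ)) * (r ^ (-(N:ℝ)) * ε ^ (N:ℝ)))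
        = Cnp ^ p * 2 ^ (p - (N:ℝ)) * (ε ^ (p - (N:ℝ)) * ε ^ (N:ℝ)) * r ^ (-(N:ℝ)) := by ring
      _ = Cnp ^ p * 2 ^ (p - (N:ℝ)) * ε ^ p * r ^ (-(N:ℝ)) := by rw [hsplit]
  linarith


/-- Assume N = p^2. There are a constant C = C(N,p,eta) > 0 and eps0 in (0,1)
such that for all eps in (0,eps0): integral of u~_eps^p >= eps^p |log eps| / C,
where u~_eps(x) = eta(|x|) u_eps(x). -/
theorem stmt_10 (N : ℕ) (hN : 2 ≤ N) (p : ℝ) (hp1 : 1 < p) (hpN : p < (N : ℝ))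
    (hNp2 : (N : ℝ) = p ^ 2)
    (Cnp : ℝ) (hC : 0 < Cnp)
    (uε : ℝ → EuclideanSpace ℝ (Fin N) → ℝ)
    (huε : ∀ ε > (0 : ℝ), ∀ x, uε ε x = Cnp * ε ^ (-((N : ℝ) - p) / p) *
      (1 + (‖x‖ / ε) ^ (p / (p - 1))) ^ (-((N : ℝ) - p) / p))
    (hnorm : ∀ ε > (0 : ℝ),
      (∫ x, ‖fderiv ℝ (uε ε) x‖ ^ p) = sobolevS N p ^ ((N : ℝ) / p) ∧
      (∫ x, uε ε x ^ ((N : ℝ) * p / ((N : ℝ) - p))) = sobolevS N p ^ ((N : ℝ) / p))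
    (η : ℝ → ℝ) (hη : ContDiff ℝ (⊤ : ℕ∞) η) (hη01 : ∀ s, η s ∈ Set.Icc (0 : ℝ) 1)
    (hη1 : ∀ s ≤ (1 / 4 : ℝ), η s = 1) (hη0 : ∀ s, (1 / 2 : ℝ) ≤ s → η s = 0) :
    ∃ C : ℝ, 0 < C ∧ ∃ ε₀ ∈ Set.Ioo (0 : ℝ) 1, ∀ ε ∈ Set.Ioo (0 : ℝ) ε₀,
      (∫ x, (η ‖x‖ * uε ε x) ^ p) ≥ ε ^ p * |Real.log ε| / C := by
  clear hnorm
  have hp0 : (0:ℝ) < p := by linarith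
  haveI : NeZero N := ⟨by omega⟩
  have hdim : Module.finrank ℝ (EuclideanSpace ℝ (Fin N)) = N := by
    simp [finrank_euclideanSpace]
  haveI : Nontrivial (EuclideanSpace ℝ (Fin N)) :=
    Module.nontrivial_of_finrank_pos (R := ℝ) (by rw [hdim]; omega)
  set vol : ℝ := (volume (Metric.ball (0 : EuclideanSpace ℝ (Fin N)) 1)).toReal with hvol
  have hvolpos : 0 < vol :=
    ENNReal.toReal_pos (Metric.measure_ball_pos volume 0 one_pos).ne' measure_ball_lt_top.ne
  set ω : ℝ := (N : ℝ) * vol with hω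
  have hωpos : 0 < ω := by
    have : (0:ℝ) < (N:ℝ) := by positivity
    positivity
  set c1 : ℝ := Cnp ^ p * 2 ^ (p - (N : ℝ)) with hc1def
  have hc1 : 0 < c1 := by positivity
  refine ⟨2 / (c1 * ω), by positivity, 1/32, ⟨by norm_num, by norm_num⟩, ?_⟩
  rintro ε ⟨hε0, hε32⟩
  have hε14 : ε ≤ (1/4 : ℝ) := by linarith
  have huεnn : ∀ x, 0 ≤ uε ε x := by
    intro x; rw [huε ε hε0 x]; positivity
  -- continuity and integrability of the integrand
  have huεc : Continuous (uε ε) := by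
    have hfun : uε ε = fun x => Cnp * ε ^ (-((N : ℝ) - p) / p) *
        (1 + (‖x‖ / ε) ^ (p / (p - 1))) ^ (-((N : ℝ) - p) / p) := funext (huε ε hε0)
    rw [hfun]
    have h1 : Continuous fun x : EuclideanSpace ℝ (Fin N) => (‖x‖ / ε) ^ (p / (p - 1)) :=
      (continuous_norm.div_const ε).rpow_const fun x => Or.inr (div_nonneg hp0.le (by linarith))
    refine continuous_const.mul ((continuous_const.add h1).rpow_const fun x => Or.inl ?_)
    have h0 : (0:ℝ) ≤ (‖x‖ / ε) ^ (p / (p - 1)) :=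
      Real.rpow_nonneg (div_nonneg (norm_nonneg _) hε0.le) _
    intro hcontra; simp only [Pi.add_apply] at hcontra; linarith
  set F : EuclideanSpace ℝ (Fin N) → ℝ := fun x => (η ‖x‖ * uε ε x) ^ p with hF
  have hFc : Continuous F :=
    ((hη.continuous.comp continuous_norm).mul huεc).rpow_const fun x => Or.inr hp0.le
  have hFcs : HasCompactSupport F := by
    apply HasCompactSupport.intro (isCompact_closedBall (0 : EuclideanSpace ℝ (Fin N)) (1/2))
    intro x hx
    have hx' : (1/2 : ℝ) ≤ ‖x‖ := by
      simp only [Metric.mem_closedBall, dist_zero_right, not_le] at hx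
      linarith
    simp only [hF, hη0 _ hx', zero_mul, Real.zero_rpow hp0.ne']
  have hFint : Integrable F := hFc.integrable_of_hasCompactSupport hFcs
  -- lower bound function
  set g : ℝ → ℝ := (Set.Ioc ε (1/4 : ℝ)).indicator (fun r => c1 * ε ^ p * r ^ (-(N:ℝ))) with hg
  -- pointwise bound
  have hmono : ∀ x, g ‖x‖ ≤ F x := by
    intro x
    by_cases hx : ‖x‖ ∈ Set.Ioc ε (1/4 : ℝ)
    · rw [hg, Set.indicator_of_mem hx]
      obtain ⟨hx1, hx2⟩ := hx
      have hη1' : η ‖x‖ = 1 := hη1 _ hx2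
      have hkey := key_ineq hp1 hpN hNp2 hC hε0 hx1
      simp only [hF, hη1', one_mul, huε ε hε0 x]
      calc c1 * ε ^ p * ‖x‖ ^ (-(N:ℝ))
          = Cnp ^ p * 2 ^ (p - (N : ℝ)) * ε ^ p * ‖x‖ ^ (-(N:ℝ)) := by rw [hc1def]
        _ ≤ _ := hkey
    · rw [hg, Set.indicator_of_notMem hx]
      exact Real.rpow_nonneg (mul_nonneg (hη01 _).1 (huεnn x)) p
  -- integrability of the lower bound
  have hA : MeasurableSet ((fun x : EuclideanSpace ℝ (Fin N) => ‖x‖) ⁻¹' Set.Ioc ε (1/4 : ℝ)) :=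
    measurable_norm measurableSet_Ioc
  have hgnorm : (fun x : EuclideanSpace ℝ (Fin N) => g ‖x‖) =
      ((fun x : EuclideanSpace ℝ (Fin N) => ‖x‖) ⁻¹' Set.Ioc ε (1/4 : ℝ)).indicator
        (fun x => c1 * ε ^ p * ‖x‖ ^ (-(N:ℝ))) := by
    funext x
    by_cases hx : ‖x‖ ∈ Set.Ioc ε (1/4 : ℝ)
    · rw [hg, Set.indicator_of_mem hx, Set.indicator_of_mem (Set.mem_preimage.mpr hx)]
    · rw [hg, Set.indicator_of_notMem hx,
        Set.indicator_of_notMem (fun h => hx (Set.mem_preimage.mp h))]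
  have hgint : Integrable (fun x : EuclideanSpace ℝ (Fin N) => g ‖x‖) := by
    rw [hgnorm]
    have hA'c : IsCompact (Metric.closedBall (0 : EuclideanSpace ℝ (Fin N)) (1/4)
        \ Metric.ball 0 ε) := (isCompact_closedBall _ _).diff Metric.isOpen_ball
    have hsub : ((fun x : EuclideanSpace ℝ (Fin N) => ‖x‖) ⁻¹' Set.Ioc ε (1/4 : ℝ)) ⊆
        Metric.closedBall (0 : EuclideanSpace ℝ (Fin N)) (1/4) \ Metric.ball 0 ε := by
      intro x hx
      simp only [Set.mem_preimage, Set.mem_Ioc] at hx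
      simp only [Set.mem_diff, Metric.mem_closedBall, Metric.mem_ball, dist_zero_right, not_lt]
      exact ⟨hx.2, hx.1.le⟩
    have hcont : ContinuousOn (fun x : EuclideanSpace ℝ (Fin N) => c1 * ε ^ p * ‖x‖ ^ (-(N:ℝ)))
        (Metric.closedBall (0 : EuclideanSpace ℝ (Fin N)) (1/4) \ Metric.ball 0 ε) := by
      intro x hx
      have hx0 : ‖x‖ ≠ 0 := by
        simp only [Set.mem_diff, Metric.mem_ball, dist_zero_right, not_lt] at hx
        simp only [Metric.mem_closedBall] at hx
        exact ne_of_gt (lt_of_lt_of_le hε0 hx.2)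
      exact (continuousAt_const.mul
        (continuous_norm.continuousAt.rpow_const (Or.inl hx0))).continuousWithinAt
    exact ((hcont.integrableOn_compact hA'c).mono_set hsub).integrable_indicator hA
  -- compare integrals
  have hle : (∫ x, g ‖x‖) ≤ ∫ x, F x := integral_mono hgint hFint hmono
  -- compute the integral of the lower bound via polar coordinates
  have hisub : Set.Ioi (0:ℝ) ∩ Set.Ioc ε (1/4) = Set.Ioc ε (1/4) :=
    Set.inter_eq_self_of_subset_right (fun y hy => lt_trans hε0 hy.1)
  have hinner : (∫ y in Set.Ioi (0:ℝ),
      y ^ (Module.finrank ℝ (EuclideanSpace ℝ (Fin N)) - 1) • g y)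
      = c1 * ε ^ p * Real.log ((1/4) / ε) := by
    have hind : (fun y : ℝ => y ^ (Module.finrank ℝ (EuclideanSpace ℝ (Fin N)) - 1) • g y)
        = (Set.Ioc ε (1/4:ℝ)).indicator
            (fun y => y ^ (N - 1) * (c1 * ε ^ p * y ^ (-(N:ℝ)))) := by
      funext y
      rw [hdim]
      by_cases hy : y ∈ Set.Ioc ε (1/4:ℝ)
      · rw [hg, Set.indicator_of_mem hy, Set.indicator_of_mem hy, smul_eq_mul]
      · rw [hg, Set.indicator_of_notMem hy, Set.indicator_of_notMem hy, smul_zero]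
    rw [hind, MeasureTheory.setIntegral_indicator measurableSet_Ioc, hisub]
    have hcongr : ∀ y ∈ Set.Ioc ε (1/4:ℝ), y ^ (N-1) * (c1 * ε ^ p * y ^ (-(N:ℝ)))
        = c1 * ε ^ p * y⁻¹ := by
      intro y hy
      have hy0 : 0 < y := lt_trans hε0 hy.1
      have h1 : (y:ℝ) ^ (N-1) = y ^ (((N-1:ℕ)):ℝ) := (Real.rpow_natCast y (N-1)).symm
      have h2 : ((N-1:ℕ):ℝ) = (N:ℝ) - 1 := by
        rw [Nat.cast_sub (by omega : 1 ≤ N)]; norm_num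
      have h3 : y ^ ((N:ℝ)-1) * y ^ (-(N:ℝ)) = y⁻¹ := by
        rw [← Real.rpow_add hy0, show (N:ℝ) - 1 + -(N:ℝ) = -1 by ring, Real.rpow_neg_one]
      calc y ^ (N-1) * (c1 * ε ^ p * y ^ (-(N:ℝ)))
          = c1 * ε ^ p * (y ^ ((N:ℝ)-1) * y ^ (-(N:ℝ))) := by rw [h1, h2]; ring
        _ = c1 * ε ^ p * y⁻¹ := by rw [h3]
    rw [MeasureTheory.setIntegral_congr_fun measurableSet_Ioc hcongr,
      MeasureTheory.integral_const_mul]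
    congr 1
    rw [← intervalIntegral.integral_of_le (by linarith : ε ≤ (1/4:ℝ)),
      integral_inv]
    rw [Set.uIcc_of_le (by linarith : ε ≤ (1/4:ℝ))]
    intro h
    exact absurd h.1 (not_le.2 hε0)
  have hcalc : (∫ x : EuclideanSpace ℝ (Fin N), g ‖x‖) = ω * (c1 * ε ^ p * Real.log ((1/4)/ε)) := by
    rw [MeasureTheory.integral_fun_norm_addHaar volume g, hinner, hdim,
      nsmul_eq_mul, smul_eq_mul, hω, hvol]; simp only [measureReal_def]; ring
  -- log estimates
  have hlog1 : Real.log ε < 0 := Real.log_neg hε0 (by linarith)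
  have habs : |Real.log ε| = -Real.log ε := abs_of_neg hlog1
  have hlogdiv : Real.log ((1/4:ℝ)/ε) = -Real.log 4 - Real.log ε := by
    rw [Real.log_div (by norm_num) (ne_of_gt hε0),
      show (1/4:ℝ) = 4⁻¹ by norm_num, Real.log_inv]
  have hlog32 : Real.log ε < -Real.log 32 := by
    have h := Real.log_lt_log hε0 hε32
    rwa [show (1/32:ℝ) = 32⁻¹ by norm_num, Real.log_inv] at h
  have h32 : 2 * Real.log 4 ≤ Real.log 32 := by
    have hle16 : Real.log 16 ≤ Real.log 32 := Real.log_le_log (by norm_num) (by norm_num)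
    have h16 : Real.log 16 = 2 * Real.log 4 := by
      rw [show (16:ℝ) = 4 ^ (2:ℕ) by norm_num, Real.log_pow]
      push_cast; ring
    linarith
  have hεp : 0 ≤ ε ^ p := Real.rpow_nonneg hε0.le p
  have key2 : ε ^ p * |Real.log ε| / (2 / (c1 * ω)) ≤ ω * (c1 * ε ^ p * Real.log ((1/4)/ε)) := by
    rw [habs, hlogdiv, div_div_eq_mul_div, div_le_iff₀ (by norm_num : (0:ℝ) < 2)]
    have hprod : 0 ≤ (ω * c1 * ε ^ p) * ((-Real.log ε) - 2 * Real.log 4) :=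
      mul_nonneg (mul_nonneg (mul_nonneg hωpos.le hc1.le) hεp) (by linarith)
    nlinarith [hprod]
  calc ε ^ p * |Real.log ε| / (2 / (c1 * ω))
      ≤ ω * (c1 * ε ^ p * Real.log ((1/4)/ε)) := key2
    _ = ∫ x : EuclideanSpace ℝ (Fin N), g ‖x‖ := hcalc.symm
    _ ≤ ∫ x, F x := hle
end
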